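/- arXiv:math/0612481 — 3 statements merged into one kernel-verified Lean document; each statement's English description precedes it below -/
import Mathlib

section
/- Let d, n ≥ 1 and let A₁, …, A_d : ℝ^d → M_n(ℂ) be continuously differentiable matrix-valued maps satisfying the exponential (Crönström) gauge condition Σ_{k=1}^d x^k A_k(x) = 0 for all x ∈ ℝ^d. Define the curvature F_{ℓk} = ∂_ℓ A_k − ∂_k A_ℓ + [A_ℓ, A_k] (matrix commutator). Then for every x ∈ ℝ^d and every k = 1, …, d one has A_k(x) = ∫₀¹ Σ_{ℓ=1}^d x^ℓ F_{ℓk}(s x) · s ds. -/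
/-!
Contracting the curvature with the radial vector `y` and using the gauge condition, the
commutator term contracts to `[∑ ℓ, y ℓ • A ℓ y, A k y] = 0`, and differentiating the gauge
condition along `∂_k` turns `∑ ℓ, y ℓ • ∂_k A_ℓ(y)` into `-A_k(y)`. Hence
`∑ ℓ, y ℓ • F_{ℓk}(y) = D A_k(y) y + A_k(y)`, so at `y = s • x` the integrand is exactly
`d/ds (s • A_k(s • x))`, and the fundamental theorem of calculus on `[0, 1]` gives `A_k(x)`.
-/

noncomputable section
open MeasureTheory Filter Topology

attribute [local instance] Matrix.frobeniusNormedAddCommGroup Matrix.frobeniusNormedSpace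

variable {d n : ℕ}

/-- Partial derivative `∂_ℓ` of a map on `ℝ^d`. -/
def pd {E : Type*} [NormedAddCommGroup E] [NormedSpace ℝ E]
    (ℓ : Fin d) (f : (Fin d → ℝ) → E) (x : Fin d → ℝ) : E :=
  fderiv ℝ f x (Pi.single ℓ 1)

/-- Curvature `F_{ℓk} = ∂_ℓ A_k − ∂_k A_ℓ + [A_ℓ, A_k]` of a connection
`A : ℝ^d → M_n(ℂ)^d`. -/
def curvF (A : Fin d → (Fin d → ℝ) → Matrix (Fin n) (Fin n) ℂ)
    (ℓ k : Fin d) (x : Fin d → ℝ) : Matrix (Fin n) (Fin n) ℂ :=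
  pd ℓ (A k) x - pd k (A ℓ) x + (A ℓ x * A k x - A k x * A ℓ x)

section PartialDerivatives

variable {E : Type*} [NormedAddCommGroup E] [NormedSpace ℝ E]

theorem fderiv_apply_eq_sum_smul_pd (f : (Fin d → ℝ) → E) (y v : Fin d → ℝ) :
    fderiv ℝ f y v = ∑ ℓ, v ℓ • pd ℓ f y := by
  conv_lhs => rw [pi_eq_sum_univ' v]
  simp only [map_sum, map_smul, pd]

theorem pd_fun_sum {ι : Type*} (s : Finset ι) {f : ι → (Fin d → ℝ) → E} {y : Fin d → ℝ}
    (hf : ∀ i ∈ s, DifferentiableAt ℝ (f i) y) (k : Fin d) :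
    pd k (fun z => ∑ i ∈ s, f i z) y = ∑ i ∈ s, pd k (f i) y := by
  simp only [pd, fderiv_fun_sum hf, FunLike.coe_sum, Finset.sum_apply]

theorem pd_coord_smul {f : (Fin d → ℝ) → E} {y : Fin d → ℝ} (hf : DifferentiableAt ℝ f y)
    (ℓ k : Fin d) :
    pd k (fun z => z ℓ • f z) y = y ℓ • pd k f y + (Pi.single k 1 : Fin d → ℝ) ℓ • f y := by
  have hcoord : fderiv ℝ (fun z : Fin d → ℝ => z ℓ) y = ContinuousLinearMap.proj ℓ :=
    (ContinuousLinearMap.proj (R := ℝ) (φ := fun _ : Fin d => ℝ) ℓ).fderiv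
  simp [pd, fderiv_fun_smul (differentiableAt_apply ℓ y) hf, hcoord]

theorem add_sum_smul_pd_eq_zero_of_gauge {A : Fin d → (Fin d → ℝ) → E}
    (hA : ∀ ℓ, Differentiable ℝ (A ℓ)) (hgauge : ∀ x : Fin d → ℝ, ∑ ℓ, x ℓ • A ℓ x = 0)
    (k : Fin d) (y : Fin d → ℝ) :
    A k y + ∑ ℓ, y ℓ • pd k (A ℓ) y = 0 := by
  have hpd : pd k (fun z => ∑ ℓ, z ℓ • A ℓ z) y = 0 := by
    simp [funext hgauge, pd]
  rw [pd_fun_sum (f := fun ℓ z => z ℓ • A ℓ z) _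
    (fun ℓ _ => (differentiableAt_apply ℓ y).smul (hA ℓ y))] at hpd
  simpa [pd_coord_smul (hA _ y), Finset.sum_add_distrib, Pi.single_apply, add_comm] using hpd

end PartialDerivatives

theorem sum_smul_commutator {ι R : Type*} [Ring R] [Module ℝ R] [IsScalarTower ℝ R R]
    [SMulCommClass ℝ R R] (s : Finset ι) (c : ι → ℝ) (a : ι → R) (b : R) :
    ∑ i ∈ s, c i • (a i * b - b * a i) = (∑ i ∈ s, c i • a i) * b - b * ∑ i ∈ s, c i • a i := by
  simp only [smul_sub, Finset.sum_sub_distrib, Finset.sum_mul, Finset.mul_sum, smul_mul_assoc,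
    mul_smul_comm]

theorem sum_smul_curvF_of_gauge {A : Fin d → (Fin d → ℝ) → Matrix (Fin n) (Fin n) ℂ}
    (hA : ∀ ℓ, Differentiable ℝ (A ℓ)) (hgauge : ∀ x : Fin d → ℝ, ∑ ℓ, x ℓ • A ℓ x = 0)
    (k : Fin d) (y : Fin d → ℝ) :
    ∑ ℓ, y ℓ • curvF A ℓ k y = fderiv ℝ (A k) y y + A k y := by
  have hderiv := add_sum_smul_pd_eq_zero_of_gauge hA hgauge k y
  have hcomm := sum_smul_commutator Finset.univ y (fun ℓ => A ℓ y) (A k y)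
  rw [hgauge y, zero_mul, mul_zero, sub_zero] at hcomm
  simp only [curvF, smul_add, Finset.sum_add_distrib]
  rw [hcomm, add_zero]
  simp only [smul_sub, Finset.sum_sub_distrib, ← fderiv_apply_eq_sum_smul_pd]
  rw [← neg_eq_of_add_eq_zero_right hderiv]
  exact sub_neg_eq_add _ _

section RadialIntegral

variable {F E : Type*} [NormedAddCommGroup F] [NormedSpace ℝ F]
  [NormedAddCommGroup E] [NormedSpace ℝ E]

theorem hasDerivAt_smul_comp_smul {f : F → E} {x : F} {s : ℝ}
    (hf : DifferentiableAt ℝ f (s • x)) :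
    HasDerivAt (fun t : ℝ => t • f (t • x)) (f (s • x) + s • fderiv ℝ f (s • x) x) s := by
  have hline : HasDerivAt (fun t : ℝ => t • x) x s := by
    simpa using (hasDerivAt_id s).smul_const x
  simpa [add_comm] using (hasDerivAt_id s).fun_smul (hf.hasFDerivAt.comp_hasDerivAt s hline)

/-- The integrand is `d/ds (s • f (s • x))`. -/
theorem integral_add_smul_fderiv_smul [CompleteSpace E] {f : F → E} (hf : ContDiff ℝ 1 f)
    (x : F) :
    ∫ s in (0 : ℝ)..1, (f (s • x) + s • fderiv ℝ f (s • x) x) = f x := by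
  have hline : Continuous fun s : ℝ => s • x := continuous_id.smul continuous_const
  have hcont : Continuous fun s : ℝ => f (s • x) + s • fderiv ℝ f (s • x) x :=
    (hf.continuous.comp hline).add
      (continuous_id.smul (((hf.continuous_fderiv one_ne_zero).comp hline).clm_apply
        continuous_const))
  rw [intervalIntegral.integral_eq_sub_of_hasDerivAt
    (fun s _ => hasDerivAt_smul_comp_smul ((hf.differentiable one_ne_zero) _))
    (hcont.intervalIntegrable 0 1)]
  simp

end RadialIntegral

theorem exponential_gauge_recovery_general
    {d n : ℕ}
    (A : Fin d → (Fin d → ℝ) → Matrix (Fin n) (Fin n) ℂ)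
    (hA : ∀ k, ContDiff ℝ 1 (A k))
    (hgauge : ∀ x : Fin d → ℝ, ∑ k : Fin d, x k • A k x = 0) :
    ∀ (x : Fin d → ℝ) (k : Fin d),
      A k x = ∫ s in (0 : ℝ)..1, s • (∑ ℓ : Fin d, x ℓ • curvF A ℓ k (s • x)) := by
  intro x k
  have hdiff : ∀ ℓ, Differentiable ℝ (A ℓ) := fun ℓ => (hA ℓ).differentiable one_ne_zero
  rw [← integral_add_smul_fderiv_smul (hA k) x]
  refine intervalIntegral.integral_congr fun s _ => ?_
  have hcontract := sum_smul_curvF_of_gauge hdiff hgauge k (s • x)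
  simp only [Pi.smul_apply, smul_eq_mul, ← smul_smul, ← Finset.smul_sum, map_smul] at hcontract
  exact (hcontract.trans (add_comm _ _)).symm

/-- in the exponential (Crönström) gauge `Σ_k x^k A_k(x) = 0`, the
connection is recovered from its curvature by
`A_k(x) = ∫₀¹ Σ_ℓ x^ℓ F_{ℓk}(sx) s ds`. -/
theorem exponential_gauge_recovery
    {d n : ℕ} (hd : 1 ≤ d) (hn : 1 ≤ n)
    (A : Fin d → (Fin d → ℝ) → Matrix (Fin n) (Fin n) ℂ)
    (hA : ∀ k, ContDiff ℝ 1 (A k))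
    (hgauge : ∀ x : Fin d → ℝ, ∑ k : Fin d, x k • A k x = 0) :
    ∀ (x : Fin d → ℝ) (k : Fin d),
      A k x = ∫ s in (0 : ℝ)..1, s • (∑ ℓ : Fin d, x ℓ • curvF A ℓ k (s • x)) :=
  exponential_gauge_recovery_general A hA hgauge
end
end

section
/- Let u : ℝ^d × ℝ → S² be a smooth solution of the Schrödinger map equation ∂_t u = Σ_{k=1}^d ∂_k ( u × ∂_k u ), and let e : ℝ^d × ℝ → ℝ³ be smooth with |e| = 1 and ⟨e, u⟩ = 0 pointwise. For α = 0, 1, …, d (with ∂_0 = ∂_t) define q_α : ℝ^d×ℝ → ℂ by q_α = ⟨∂_α u, e⟩ + i ⟨∂_α u, u × e⟩ and a_α : ℝ^d×ℝ → ℝ by a_α = ⟨∂_α e, u × e⟩, and set D_α = ∂_α + i a_α. Then (summing over repeated spatial indices from 1 to d): (i) ∂_α e + (Re q_α) u = a_α (u × e); (ii) q_0 = i D_ℓ q_ℓ; (iii) D_t q_ℓ = i D_k² q_ℓ − ⟨q_ℓ, i q_k⟩ q_k for each ℓ; (iv) D_ℓ q_k = D_k q_ℓ for all k, ℓ; (v)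 ∂_ℓ a_j − ∂_j a_ℓ = ⟨q_ℓ, i q_j⟩ for all ℓ, j = 1,…,d; (vi) ∂_ℓ a_0 − ∂_t a_ℓ = −⟨q_ℓ, D_j q_j⟩ for all ℓ. -/
noncomputable section
open MeasureTheory Filter Topology

/-- Vectors in `ℝ³`. -/
abbrev V3 := Fin 3 → ℝ

/-- Euclidean inner product on `ℝ³`. -/
def dot3 (v w : V3) : ℝ := ∑ i, v i * w i

/-- Cross product on `ℝ³`. -/
def cross3 (v w : V3) : V3 := crossProduct v w

/-- Real pairing of complex numbers: `⟨z,w⟩ = Re (z * conj w)`. -/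
def cdot (z w : ℂ) : ℝ := (z * (starRingEnd ℂ) w).re

variable {d : ℕ}

/-- Time derivative of a function of `(t,x) ∈ ℝ × ℝ^d`. -/
def Dt {E : Type*} [NormedAddCommGroup E] [NormedSpace ℝ E]
    (f : ℝ × (Fin d → ℝ) → E) (p : ℝ × (Fin d → ℝ)) : E :=
  fderiv ℝ f p (1, 0)

/-- Spatial partial derivative `∂_k` of a function of `(t,x) ∈ ℝ × ℝ^d`. -/
def Dx {E : Type*} [NormedAddCommGroup E] [NormedSpace ℝ E]
    (k : Fin d) (f : ℝ × (Fin d → ℝ) → E) (p : ℝ × (Fin d → ℝ)) : E :=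
  fderiv ℝ f p (0, Pi.single k 1)

/-- Direction of differentiation indexed by `α ∈ {0,1,…,d}` (`0` is time). -/
def dir (d : ℕ) (α : Fin (d + 1)) : ℝ × (Fin d → ℝ) :=
  Fin.cases ((1 : ℝ), 0) (fun k => ((0 : ℝ), Pi.single k 1)) α

/-- Partial derivative `∂_α`, `α = 0,1,…,d`, with `∂_0 = ∂_t`. -/
def pda {E : Type*} [NormedAddCommGroup E] [NormedSpace ℝ E]
    (α : Fin (d + 1)) (f : ℝ × (Fin d → ℝ) → E) (p : ℝ × (Fin d → ℝ)) : E :=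
  fderiv ℝ f p (dir d α)

/-- Gauge covariant derivative `D_α = ∂_α + i a_α`. -/
def covD (a : Fin (d + 1) → ℝ × (Fin d → ℝ) → ℝ) (α : Fin (d + 1))
    (f : ℝ × (Fin d → ℝ) → ℂ) : ℝ × (Fin d → ℝ) → ℂ :=
  fun p => pda α f p + Complex.I * (a α p : ℂ) * f p




lemma dot3_comm (v w : V3) : dot3 v w = dot3 w v := by
  simp [dot3, mul_comm]

lemma cross3_apply (v w : V3) (i : Fin 3) :
    cross3 v w = ![v 1 * w 2 - v 2 * w 1, v 2 * w 0 - v 0 * w 2, v 0 * w 1 - v 1 * w 0] := by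
  simp [cross3, cross_apply]

lemma dot3_cross_u (u e : V3) : dot3 (cross3 u e) (u) = 0 := by
  simp [dot3, cross3, cross_apply, Fin.sum_univ_three]; ring

lemma dot3_cross_e (u e : V3) : dot3 (cross3 u e) (e) = 0 := by
  simp [dot3, cross3, cross_apply, Fin.sum_univ_three]; ring

lemma dot3_cross_self (u e : V3) (hu : dot3 u u = 1) (he : dot3 e e = 1)
    (heu : dot3 e u = 0) : dot3 (cross3 u e) (cross3 u e) = 1 := by
  simp only [dot3, cross3, cross_apply, Fin.sum_univ_three] at *
  simp only [Matrix.cons_val_zero, Matrix.cons_val_one, Matrix.head_cons, Matrix.cons_val_two, Matrix.tail_cons] at *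
  linear_combination (e 0^2 + e 1^2 + e 2^2) * hu + he - (e 0 * u 0 + e 1 * u 1 + e 2 * u 2) * heu


lemma funext3 {f g : V3} (h0 : f 0 = g 0) (h1 : f 1 = g 1) (h2 : f 2 = g 2) : f = g := by
  funext i; fin_cases i; exacts [h0, h1, h2]

lemma cross3_ue (u e : V3) (hu : dot3 u u = 1) (heu : dot3 e u = 0) :
    cross3 u (cross3 u e) = -e := by
  simp only [dot3, Fin.sum_univ_three] at hu heu
  apply funext3 <;>
    simp only [cross3, cross_apply, Matrix.cons_val_zero, Matrix.cons_val_one,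
      Matrix.head_cons, Matrix.cons_val_two, Matrix.tail_cons, Pi.neg_apply]
  · linear_combination (u 0) * heu - (e 0) * hu
  · linear_combination (u 1) * heu - (e 1) * hu
  · linear_combination (u 2) * heu - (e 2) * hu

lemma expand3 (u e : V3) (hu : dot3 u u = 1) (he : dot3 e e = 1)
    (heu : dot3 e u = 0) (w : V3) :
    dot3 w u • u + dot3 w e • e + dot3 w (cross3 u e) • cross3 u e = w := by
  simp only [dot3, Fin.sum_univ_three] at hu he heu
  apply funext3 <;>
    simp only [Pi.add_apply, Pi.smul_apply, smul_eq_mul, dot3, cross3, cross_apply,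
      Fin.sum_univ_three, Matrix.cons_val_zero, Matrix.cons_val_one, Matrix.head_cons,
      Matrix.cons_val_two, Matrix.tail_cons]
  · linear_combination (w 0 * (e 0^2+e 1^2+e 2^2) - e 0 * (w 0*e 0+w 1*e 1+w 2*e 2)) * hu + (w 0 - u 0 * (w 0*u 0+w 1*u 1+w 2*u 2)) * he + (- w 0 * (e 0*u 0+e 1*u 1+e 2*u 2) + u 0 * (w 0*e 0+w 1*e 1+w 2*e 2) + e 0 * (w 0*u 0+w 1*u 1+w 2*u 2)) * heu
  · linear_combination (w 1 * (e 0^2+e 1^2+e 2^2) - e 1 * (w 0*e 0+w 1*e 1+w 2*e 2)) * hu + (w 1 - u 1 * (w 0*u 0+w 1*u 1+w 2*u 2)) * he + (- w 1 * (e 0*u 0+e 1*u 1+e 2*u 2) + u 1 * (w 0*e 0+w 1*e 1+w 2*e 2) + e 1 * (w 0*u 0+w 1*u 1+w 2*u 2)) * heu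
  · linear_combination (w 2 * (e 0^2+e 1^2+e 2^2) - e 2 * (w 0*e 0+w 1*e 1+w 2*e 2)) * hu + (w 2 - u 2 * (w 0*u 0+w 1*u 1+w 2*u 2)) * he + (- w 2 * (e 0*u 0+e 1*u 1+e 2*u 2) + u 2 * (w 0*e 0+w 1*e 1+w 2*e 2) + e 2 * (w 0*u 0+w 1*u 1+w 2*u 2)) * heu


def dotL : V3 →ₗ[ℝ] V3 →ₗ[ℝ] ℝ :=
  LinearMap.mk₂ ℝ dot3
    (by intros m m' n; simp [dot3, add_mul, Finset.sum_add_distrib])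
    (by intros c m n; simp [dot3, Finset.mul_sum, mul_assoc])
    (by intros m n n'; simp [dot3, mul_add, Finset.sum_add_distrib])
    (by intros c m n; simp [dot3, Finset.mul_sum]; congr 1; funext i; ring)

def dotCL : V3 →L[ℝ] V3 →L[ℝ] ℝ :=
  LinearMap.toContinuousLinearMap
    ((LinearMap.toContinuousLinearMap :
        (V3 →ₗ[ℝ] ℝ) ≃ₗ[ℝ] (V3 →L[ℝ] ℝ)).toLinearMap.comp dotL)

@[simp] lemma dotCL_apply (v w : V3) : dotCL v w = dot3 v w := rfl

def crossCL : V3 →L[ℝ] V3 →L[ℝ] V3 :=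
  LinearMap.toContinuousLinearMap
    ((LinearMap.toContinuousLinearMap :
        (V3 →ₗ[ℝ] V3) ≃ₗ[ℝ] (V3 →L[ℝ] V3)).toLinearMap.comp crossProduct)

@[simp] lemma crossCL_apply (v w : V3) : crossCL v w = cross3 v w := rfl

variable {X : Type*} [NormedAddCommGroup X] [NormedSpace ℝ X]

lemma contDiff_bilin {G : Type*} [NormedAddCommGroup G] [NormedSpace ℝ G]
    (B : V3 →L[ℝ] V3 →L[ℝ] G) {f g : X → V3}
    (hf : ContDiff ℝ (⊤ : ℕ∞) f) (hg : ContDiff ℝ (⊤ : ℕ∞) g) :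
    ContDiff ℝ (⊤ : ℕ∞) (fun x => B (f x) (g x)) :=
  by have h := B.isBoundedBilinearMap.contDiff.comp (ContDiff.prodMk hf hg); exact h

lemma fderiv_bilin {G : Type*} [NormedAddCommGroup G] [NormedSpace ℝ G]
    (B : V3 →L[ℝ] V3 →L[ℝ] G) {f g : X → V3} {p : X}
    (hf : DifferentiableAt ℝ f p) (hg : DifferentiableAt ℝ g p) (v : X) :
    fderiv ℝ (fun x => B (f x) (g x)) p v
      = B (fderiv ℝ f p v) (g p) + B (f p) (fderiv ℝ g p v) := by
  have hc : DifferentiableAt ℝ (fun x => B (f x)) p :=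
    (B.differentiable.differentiableAt).comp p hf
  have h2 : fderiv ℝ (fun x => B (f x)) p = B.comp (fderiv ℝ f p) :=
    (B.hasFDerivAt.comp p hf.hasFDerivAt).fderiv
  have h1 := fderiv_clm_apply hc hg
  rw [h1]
  simp [h2, add_comm]

lemma contDiff_dot3 {f g : X → V3} (hf : ContDiff ℝ (⊤ : ℕ∞) f) (hg : ContDiff ℝ (⊤ : ℕ∞) g) :
    ContDiff ℝ (⊤ : ℕ∞) (fun x => dot3 (f x) (g x)) := by
  have := contDiff_bilin dotCL hf hg
  simpa using this

lemma contDiff_cross3 {f g : X → V3} (hf : ContDiff ℝ (⊤ : ℕ∞) f) (hg : ContDiff ℝ (⊤ : ℕ∞) g) :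
    ContDiff ℝ (⊤ : ℕ∞) (fun x => cross3 (f x) (g x)) := by
  have := contDiff_bilin crossCL hf hg
  simpa using this

lemma fderiv_dot3 {f g : X → V3} {p : X}
    (hf : DifferentiableAt ℝ f p) (hg : DifferentiableAt ℝ g p) (v : X) :
    fderiv ℝ (fun x => dot3 (f x) (g x)) p v
      = dot3 (fderiv ℝ f p v) (g p) + dot3 (f p) (fderiv ℝ g p v) := by
  have := fderiv_bilin dotCL hf hg v
  simpa using this

lemma fderiv_cross3 {f g : X → V3} {p : X}
    (hf : DifferentiableAt ℝ f p) (hg : DifferentiableAt ℝ g p) (v : X) :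
    fderiv ℝ (fun x => cross3 (f x) (g x)) p v
      = cross3 (fderiv ℝ f p v) (g p) + cross3 (f p) (fderiv ℝ g p v) := by
  have := fderiv_bilin crossCL hf hg v
  simpa using this

lemma contDiff_fderiv_apply {F : Type*} [NormedAddCommGroup F] [NormedSpace ℝ F]
    {f : X → F} (hf : ContDiff ℝ (⊤ : ℕ∞) f) (v : X) :
    ContDiff ℝ (⊤ : ℕ∞) (fun p => fderiv ℝ f p v) :=
  (hf.fderiv_right (by simp)).clm_apply contDiff_const

lemma fderiv_fderiv_symm {F : Type*} [NormedAddCommGroup F] [NormedSpace ℝ F]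
    {f : X → F} (hf : ContDiff ℝ (⊤ : ℕ∞) f) (p v w : X) :
    fderiv ℝ (fun x => fderiv ℝ f x w) p v = fderiv ℝ (fun x => fderiv ℝ f x v) p w := by
  have hd : DifferentiableAt ℝ (fderiv ℝ f) p :=
    ((hf.fderiv_right (m := (⊤ : ℕ∞)) (by simp)).differentiable (by simp)).differentiableAt
  have key : ∀ z y : X, fderiv ℝ (fun x => fderiv ℝ f x z) p y
      = fderiv ℝ (fderiv ℝ f) p y z := by
    intro z y
    have := fderiv_clm_apply (𝕜 := ℝ) hd (differentiableAt_const z)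
    rw [this]
    simp
  rw [key w v, key v w]
  exact second_derivative_symmetric
    (fun y => ((hf.differentiable (by simp)) y).hasFDerivAt) hd.hasFDerivAt v w

lemma fderiv_ofReal_comp {R : X → ℝ} {p : X} (hR : DifferentiableAt ℝ R p) (v : X) :
    fderiv ℝ (fun x => ((R x : ℝ) : ℂ)) p v = (fderiv ℝ R p v : ℂ) := by
  have h := (Complex.ofRealCLM.hasFDerivAt.comp p hR.hasFDerivAt).fderiv
  rw [show (fun x => ((R x : ℝ) : ℂ)) = Complex.ofRealCLM ∘ R from rfl, h]
  rfl

lemma fderiv_ofReal_mul {A : X → ℝ} {g : X → ℂ} {p : X}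
    (hA : DifferentiableAt ℝ A p) (hg : DifferentiableAt ℝ g p) (v : X) :
    fderiv ℝ (fun x => (A x : ℂ) * g x) p v
      = (fderiv ℝ A p v : ℂ) * g p + (A p : ℂ) * fderiv ℝ g p v := by
  have hA' : DifferentiableAt ℝ (fun x => (A x : ℂ)) p :=
    Complex.ofRealCLM.differentiable.differentiableAt.comp p hA
  have h := fderiv_fun_mul (𝕜 := ℝ) hA' hg
  have h2 : fderiv ℝ (fun x => (A x : ℂ) * g x) p v
      = (A p : ℂ) * fderiv ℝ g p v + fderiv ℝ (fun x => (A x : ℂ)) p v * g p := by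
    rw [h]; simp [mul_comm]
  rw [h2, fderiv_ofReal_comp hA]
  ring
lemma dot3_add_right (v a b : V3) : dot3 v (a + b) = dot3 v a + dot3 v b := by
  simp [dot3, mul_add, Finset.sum_add_distrib]

lemma dot3_smul_right (c : ℝ) (v w : V3) : dot3 v (c • w) = c * dot3 v w := by
  simp only [dot3, Pi.smul_apply, smul_eq_mul, Finset.mul_sum]
  exact Finset.sum_congr rfl fun i _ => by ring

section Frame
variable {X : Type*} [NormedAddCommGroup X] [NormedSpace ℝ X]

def fr (u e : X → V3) : X → V3 := fun p => cross3 (u p) (e p)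
def Rf (u e : X → V3) (v : X) : X → ℝ := fun p => dot3 (fderiv ℝ u p v) (e p)
def Sf (u e : X → V3) (v : X) : X → ℝ := fun p => dot3 (fderiv ℝ u p v) (fr u e p)
def Af (u e : X → V3) (v : X) : X → ℝ := fun p => dot3 (fderiv ℝ e p v) (fr u e p)
def Uf (u e : X → V3) (v w : X) : X → ℝ :=
  fun p => dot3 (fderiv ℝ (fun x => fderiv ℝ u x w) p v) (e p)
def Wf (u e : X → V3) (v w : X) : X → ℝ :=
  fun p => dot3 (fderiv ℝ (fun x => fderiv ℝ u x w) p v) (fr u e p)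
def Tf (u e : X → V3) (v w : X) : X → ℝ :=
  fun p => dot3 (fderiv ℝ (fun x => fderiv ℝ e x w) p v) (fr u e p)

variable {u e : X → V3}

lemma dAt {F : Type*} [NormedAddCommGroup F] [NormedSpace ℝ F] {f : X → F}
    (h : ContDiff ℝ (⊤ : ℕ∞) f) (p : X) : DifferentiableAt ℝ f p :=
  (h.differentiable (by simp)).differentiableAt

lemma sm_fr (hu : ContDiff ℝ (⊤ : ℕ∞) u) (he : ContDiff ℝ (⊤ : ℕ∞) e) : ContDiff ℝ (⊤ : ℕ∞) (fr u e) :=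
  contDiff_cross3 hu he
lemma sm_df {f : X → V3} (hf : ContDiff ℝ (⊤ : ℕ∞) f) (v : X) :
    ContDiff ℝ (⊤ : ℕ∞) (fun p => fderiv ℝ f p v) := contDiff_fderiv_apply hf v
lemma sm_R (hu : ContDiff ℝ (⊤ : ℕ∞) u) (he : ContDiff ℝ (⊤ : ℕ∞) e) (v : X) :
    ContDiff ℝ (⊤ : ℕ∞) (Rf u e v) := contDiff_dot3 (sm_df hu v) he
lemma sm_S (hu : ContDiff ℝ (⊤ : ℕ∞) u) (he : ContDiff ℝ (⊤ : ℕ∞) e) (v : X) :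
    ContDiff ℝ (⊤ : ℕ∞) (Sf u e v) := contDiff_dot3 (sm_df hu v) (sm_fr hu he)
lemma sm_A (hu : ContDiff ℝ (⊤ : ℕ∞) u) (he : ContDiff ℝ (⊤ : ℕ∞) e) (v : X) :
    ContDiff ℝ (⊤ : ℕ∞) (Af u e v) := contDiff_dot3 (sm_df he v) (sm_fr hu he)
lemma sm_U (hu : ContDiff ℝ (⊤ : ℕ∞) u) (he : ContDiff ℝ (⊤ : ℕ∞) e) (v w : X) :
    ContDiff ℝ (⊤ : ℕ∞) (Uf u e v w) := contDiff_dot3 (sm_df (sm_df hu w) v) he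
lemma sm_W (hu : ContDiff ℝ (⊤ : ℕ∞) u) (he : ContDiff ℝ (⊤ : ℕ∞) e) (v w : X) :
    ContDiff ℝ (⊤ : ℕ∞) (Wf u e v w) := contDiff_dot3 (sm_df (sm_df hu w) v) (sm_fr hu he)
lemma sm_T (hu : ContDiff ℝ (⊤ : ℕ∞) u) (he : ContDiff ℝ (⊤ : ℕ∞) e) (v w : X) :
    ContDiff ℝ (⊤ : ℕ∞) (Tf u e v w) := contDiff_dot3 (sm_df (sm_df he w) v) (sm_fr hu he)

lemma fderiv_dot_pair_zero {f g : X → V3} {c : ℝ} (hf : ContDiff ℝ (⊤ : ℕ∞) f)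
    (hg : ContDiff ℝ (⊤ : ℕ∞) g) (hconst : ∀ x, dot3 (f x) (g x) = c) (p v : X) :
    dot3 (fderiv ℝ f p v) (g p) + dot3 (f p) (fderiv ℝ g p v) = 0 := by
  have h0 : fderiv ℝ (fun x => dot3 (f x) (g x)) p v = 0 := by
    rw [show (fun x => dot3 (f x) (g x)) = fun _ => c from funext hconst]
    simp
  rw [fderiv_dot3 (dAt hf p) (dAt hg p) v] at h0
  exact h0

lemma F1 (hu : ContDiff ℝ (⊤ : ℕ∞) u) (husph : ∀ p, dot3 (u p) (u p) = 1)
    (p v : X) : dot3 (fderiv ℝ u p v) (u p) = 0 := by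
  have h := fderiv_dot_pair_zero hu hu husph p v
  have h2 := dot3_comm (u p) (fderiv ℝ u p v)
  linarith

lemma F2 (he : ContDiff ℝ (⊤ : ℕ∞) e) (henorm : ∀ p, dot3 (e p) (e p) = 1)
    (p v : X) : dot3 (fderiv ℝ e p v) (e p) = 0 := by
  have h := fderiv_dot_pair_zero he he henorm p v
  have h2 := dot3_comm (e p) (fderiv ℝ e p v)
  linarith

lemma F3 (hu : ContDiff ℝ (⊤ : ℕ∞) u) (he : ContDiff ℝ (⊤ : ℕ∞) e)
    (heu : ∀ p, dot3 (e p) (u p) = 0)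
    (p v : X) : dot3 (fderiv ℝ e p v) (u p) = - Rf u e v p := by
  have h := fderiv_dot_pair_zero he hu heu p v
  have h2 := dot3_comm (e p) (fderiv ℝ u p v)
  simp only [Rf]
  linarith

lemma F6 (hu : ContDiff ℝ (⊤ : ℕ∞) u) (he : ContDiff ℝ (⊤ : ℕ∞) e)
    (husph : ∀ p, dot3 (u p) (u p) = 1) (henorm : ∀ p, dot3 (e p) (e p) = 1)
    (heu : ∀ p, dot3 (e p) (u p) = 0) (p v : X) :
    fderiv ℝ u p v = Rf u e v p • e p + Sf u e v p • fr u e p := by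
  have h := expand3 (u p) (e p) (husph p) (henorm p) (heu p) (fderiv ℝ u p v)
  rw [F1 hu husph p v] at h
  simpa [Rf, Sf, fr] using h.symm

lemma F7 (hu : ContDiff ℝ (⊤ : ℕ∞) u) (he : ContDiff ℝ (⊤ : ℕ∞) e)
    (husph : ∀ p, dot3 (u p) (u p) = 1) (henorm : ∀ p, dot3 (e p) (e p) = 1)
    (heu : ∀ p, dot3 (e p) (u p) = 0) (p v : X) :
    fderiv ℝ e p v = (- Rf u e v p) • u p + Af u e v p • fr u e p := by
  have h := expand3 (u p) (e p) (husph p) (henorm p) (heu p) (fderiv ℝ e p v)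
  rw [F3 hu he heu p v, F2 he henorm p v] at h
  simpa [Af, fr] using h.symm

lemma F8 (hu : ContDiff ℝ (⊤ : ℕ∞) u) (he : ContDiff ℝ (⊤ : ℕ∞) e)
    (husph : ∀ p, dot3 (u p) (u p) = 1) (henorm : ∀ p, dot3 (e p) (e p) = 1)
    (heu : ∀ p, dot3 (e p) (u p) = 0) (p v : X) :
    fderiv ℝ (fr u e) p v = (- Sf u e v p) • u p + (- Af u e v p) • e p := by
  have hfu : ∀ x, dot3 (fr u e x) (u x) = 0 := fun x => dot3_cross_u (u x) (e x)
  have hfe : ∀ x, dot3 (fr u e x) (e x) = 0 := fun x => dot3_cross_e (u x) (e x)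
  have hff : ∀ x, dot3 (fr u e x) (fr u e x) = 1 := fun x =>
    dot3_cross_self (u x) (e x) (husph x) (henorm x) (heu x)
  have h1 := fderiv_dot_pair_zero (sm_fr hu he) hu hfu p v
  have h2 := fderiv_dot_pair_zero (sm_fr hu he) he hfe p v
  have h3 := fderiv_dot_pair_zero (sm_fr hu he) (sm_fr hu he) hff p v
  have h3' := dot3_comm (fr u e p) (fderiv ℝ (fr u e) p v)
  have hu' : dot3 (fderiv ℝ (fr u e) p v) (u p) = - Sf u e v p := by
    have := dot3_comm (fr u e p) (fderiv ℝ u p v)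
    simp only [Sf]; linarith
  have he' : dot3 (fderiv ℝ (fr u e) p v) (e p) = - Af u e v p := by
    have := dot3_comm (fr u e p) (fderiv ℝ e p v)
    simp only [Af]; linarith
  have hf' : dot3 (fderiv ℝ (fr u e) p v) (fr u e p) = 0 := by linarith
  have h := expand3 (u p) (e p) (husph p) (henorm p) (heu p) (fderiv ℝ (fr u e) p v)
  rw [hu', he'] at h
  have hf'' : dot3 (fderiv ℝ (fr u e) p v) (cross3 (u p) (e p)) = 0 := hf'
  rw [hf''] at h
  simpa using h.symm

lemma M1 (hu : ContDiff ℝ (⊤ : ℕ∞) u) (he : ContDiff ℝ (⊤ : ℕ∞) e)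
    (husph : ∀ p, dot3 (u p) (u p) = 1) (henorm : ∀ p, dot3 (e p) (e p) = 1)
    (heu : ∀ p, dot3 (e p) (u p) = 0) (p v w : X) :
    fderiv ℝ (Rf u e w) p v = Uf u e v w p + Af u e v p * Sf u e w p := by
  have h := fderiv_dot3 (dAt (sm_df hu w) p) (dAt he p) v
  have h2 : fderiv ℝ (Rf u e w) p v = fderiv ℝ
      (fun x => dot3 (fderiv ℝ u x w) (e x)) p v := rfl
  rw [h2, h, F7 hu he husph henorm heu p v]
  rw [dot3_add_right, dot3_smul_right, dot3_smul_right]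
  have hS : dot3 (fderiv ℝ u p w) (fr u e p) = Sf u e w p := rfl
  have hU : dot3 (fderiv ℝ (fun x => fderiv ℝ u x w) p v) (e p) = Uf u e v w p := rfl
  rw [hS, hU]
  have h1 : dot3 (fderiv ℝ u p w) (u p) = 0 := F1 hu husph p w
  rw [h1]
  ring

lemma M2 (hu : ContDiff ℝ (⊤ : ℕ∞) u) (he : ContDiff ℝ (⊤ : ℕ∞) e)
    (husph : ∀ p, dot3 (u p) (u p) = 1) (henorm : ∀ p, dot3 (e p) (e p) = 1)
    (heu : ∀ p, dot3 (e p) (u p) = 0) (p v w : X) :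
    fderiv ℝ (Sf u e w) p v = Wf u e v w p - Af u e v p * Rf u e w p := by
  have h := fderiv_dot3 (dAt (sm_df hu w) p) (dAt (sm_fr hu he) p) v
  have h2 : fderiv ℝ (Sf u e w) p v = fderiv ℝ
      (fun x => dot3 (fderiv ℝ u x w) (fr u e x)) p v := rfl
  rw [h2, h, F8 hu he husph henorm heu p v]
  rw [dot3_add_right, dot3_smul_right, dot3_smul_right]
  have h1 : dot3 (fderiv ℝ u p w) (u p) = 0 := F1 hu husph p w
  have hR : dot3 (fderiv ℝ u p w) (e p) = Rf u e w p := rfl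
  have hW : dot3 (fderiv ℝ (fun x => fderiv ℝ u x w) p v) (fr u e p) = Wf u e v w p := rfl
  rw [h1, hR, hW]
  ring

lemma M3 (hu : ContDiff ℝ (⊤ : ℕ∞) u) (he : ContDiff ℝ (⊤ : ℕ∞) e)
    (husph : ∀ p, dot3 (u p) (u p) = 1) (henorm : ∀ p, dot3 (e p) (e p) = 1)
    (heu : ∀ p, dot3 (e p) (u p) = 0) (p v w : X) :
    fderiv ℝ (Af u e w) p v = Tf u e v w p + Sf u e v p * Rf u e w p := by
  have h := fderiv_dot3 (dAt (sm_df he w) p) (dAt (sm_fr hu he) p) v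
  have h2 : fderiv ℝ (Af u e w) p v = fderiv ℝ
      (fun x => dot3 (fderiv ℝ e x w) (fr u e x)) p v := rfl
  rw [h2, h, F8 hu he husph henorm heu p v, F7 hu he husph henorm heu p w]
  rw [dot3_add_right, dot3_smul_right, dot3_smul_right]
  have hT : dot3 (fderiv ℝ (fun x => fderiv ℝ e x w) p v) (fr u e p) = Tf u e v w p := rfl
  rw [hT]
  have e1 : dot3 ((- Rf u e w p) • u p + Af u e w p • fr u e p) (u p)
      = - Rf u e w p := by
    rw [dot3_comm, dot3_add_right, dot3_smul_right, dot3_smul_right, dot3_comm (u p) (u p),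
      husph p]
    have h' : dot3 (u p) (fr u e p) = 0 := by
      rw [dot3_comm]; exact dot3_cross_u (u p) (e p)
    rw [h']
    ring
  have e2 : dot3 ((- Rf u e w p) • u p + Af u e w p • fr u e p) (e p) = 0 := by
    rw [dot3_comm, dot3_add_right, dot3_smul_right, dot3_smul_right]
    rw [heu p]
    have h' : dot3 (e p) (fr u e p) = 0 := by
      rw [dot3_comm]; exact dot3_cross_e (u p) (e p)
    rw [h']
    ring
  rw [e1, e2]
  ring

lemma Usymm (hu : ContDiff ℝ (⊤ : ℕ∞) u) (p v w : X) : Uf u e v w p = Uf u e w v p := by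
  unfold Uf
  rw [fderiv_fderiv_symm hu p v w]

lemma Wsymm (hu : ContDiff ℝ (⊤ : ℕ∞) u) (p v w : X) : Wf u e v w p = Wf u e w v p := by
  unfold Wf
  rw [fderiv_fderiv_symm hu p v w]

lemma Tsymm (he : ContDiff ℝ (⊤ : ℕ∞) e) (p v w : X) : Tf u e v w p = Tf u e w v p := by
  unfold Tf
  rw [fderiv_fderiv_symm he p v w]

end Frame

lemma cross3_add_right (v a b : V3) : cross3 v (a + b) = cross3 v a + cross3 v b :=
  map_add (crossProduct v) a b

lemma cross3_smul_right (c : ℝ) (v w : V3) : cross3 v (c • w) = c • cross3 v w :=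
  map_smul (crossProduct v) c w

lemma dot3_sum_left {ι : Type*} (s : Finset ι) (F : ι → V3) (w : V3) :
    dot3 (∑ k ∈ s, F k) w = ∑ k ∈ s, dot3 (F k) w := by
  simp only [dot3, Finset.sum_apply, Finset.sum_mul]
  rw [Finset.sum_comm]

section MoreCalc
variable {X : Type*} [NormedAddCommGroup X] [NormedSpace ℝ X]

lemma fderiv_smul3 {c : X → ℝ} {g : X → V3} (hc : ContDiff ℝ (⊤ : ℕ∞) c)
    (hg : ContDiff ℝ (⊤ : ℕ∞) g) (p v : X) :
    fderiv ℝ (fun x => c x • g x) p v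
      = fderiv ℝ c p v • g p + c p • fderiv ℝ g p v := by
  rw [fderiv_fun_smul (dAt hc p) (dAt hg p)]
  simp [add_comm]

lemma fderiv_add_apply {F : Type*} [NormedAddCommGroup F] [NormedSpace ℝ F]
    {f g : X → F} {p : X} (hf : DifferentiableAt ℝ f p)
    (hg : DifferentiableAt ℝ g p) (v : X) :
    fderiv ℝ (fun x => f x + g x) p v = fderiv ℝ f p v + fderiv ℝ g p v := by
  rw [fderiv_fun_add hf hg]; rfl

lemma fderiv_sub_apply {F : Type*} [NormedAddCommGroup F] [NormedSpace ℝ F]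
    {f g : X → F} {p : X} (hf : DifferentiableAt ℝ f p)
    (hg : DifferentiableAt ℝ g p) (v : X) :
    fderiv ℝ (fun x => f x - g x) p v = fderiv ℝ f p v - fderiv ℝ g p v := by
  rw [fderiv_fun_sub hf hg]; rfl

lemma fderiv_const_mulC {g : X → ℂ} {p : X} (hg : DifferentiableAt ℝ g p)
    (c : ℂ) (v : X) :
    fderiv ℝ (fun x => c * g x) p v = c * fderiv ℝ g p v := by
  rw [fderiv_const_mul hg c]; simp

lemma fderiv_sum_apply' {ι : Type*} (s : Finset ι) {F : ι → X → ℂ} {p : X}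
    (hF : ∀ k ∈ s, DifferentiableAt ℝ (F k) p) (v : X) :
    fderiv ℝ (fun x => ∑ k ∈ s, F k x) p v = ∑ k ∈ s, fderiv ℝ (F k) p v := by
  rw [fderiv_fun_sum hF]; simp

end MoreCalc

section Key
variable {X : Type*} [NormedAddCommGroup X] [NormedSpace ℝ X] {u e : X → V3}

lemma smq (hu : ContDiff ℝ (⊤ : ℕ∞) u) (he : ContDiff ℝ (⊤ : ℕ∞) e) (w : X) :
    ContDiff ℝ (⊤ : ℕ∞) (fun x => ((Rf u e w x : ℝ) : ℂ) + Complex.I * ((Sf u e w x : ℝ) : ℂ)) := by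
  exact ((Complex.ofRealCLM.contDiff.comp (sm_R hu he w)).add
    (contDiff_const.mul (Complex.ofRealCLM.contDiff.comp (sm_S hu he w))))

lemma keyD (hu : ContDiff ℝ (⊤ : ℕ∞) u) (he : ContDiff ℝ (⊤ : ℕ∞) e)
    (husph : ∀ p, dot3 (u p) (u p) = 1) (henorm : ∀ p, dot3 (e p) (e p) = 1)
    (heu : ∀ p, dot3 (e p) (u p) = 0) (p v w : X) :
    fderiv ℝ (fun x => ((Rf u e w x : ℝ) : ℂ) + Complex.I * ((Sf u e w x : ℝ) : ℂ)) p v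
      + Complex.I * ((Af u e v p : ℝ) : ℂ)
        * (((Rf u e w p : ℝ) : ℂ) + Complex.I * ((Sf u e w p : ℝ) : ℂ))
    = ((Uf u e v w p : ℝ) : ℂ) + Complex.I * ((Wf u e v w p : ℝ) : ℂ) := by
  have hR : DifferentiableAt ℝ (fun x => ((Rf u e w x : ℝ) : ℂ)) p :=
    dAt (Complex.ofRealCLM.contDiff.comp (sm_R hu he w)) p
  have hS : DifferentiableAt ℝ (fun x => ((Sf u e w x : ℝ) : ℂ)) p :=
    dAt (Complex.ofRealCLM.contDiff.comp (sm_S hu he w)) p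
  rw [fderiv_add_apply hR (hS.const_mul Complex.I) v,
    fderiv_const_mulC hS Complex.I v,
    fderiv_ofReal_comp (dAt (sm_R hu he w) p) v,
    fderiv_ofReal_comp (dAt (sm_S hu he w) p) v,
    M1 hu he husph henorm heu p v w, M2 hu he husph henorm heu p v w]
  push_cast
  linear_combination ((Af u e v p : ℂ)) * ((Sf u e w p : ℂ)) * Complex.I_sq

lemma fderiv_I_ofReal_mul {A : X → ℝ} {g : X → ℂ} {p : X}
    (hA : DifferentiableAt ℝ A p) (hg : DifferentiableAt ℝ g p) (v : X) :
    fderiv ℝ (fun x => Complex.I * ((A x : ℝ) : ℂ) * g x) p v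
      = Complex.I * ((fderiv ℝ A p v : ℝ) : ℂ) * g p
        + Complex.I * ((A p : ℝ) : ℂ) * fderiv ℝ g p v := by
  have hmul : DifferentiableAt ℝ (fun x => ((A x : ℝ) : ℂ) * g x) p :=
    (Complex.ofRealCLM.differentiable.differentiableAt.comp p hA).mul hg
  have hfun : (fun x => Complex.I * ((A x : ℝ) : ℂ) * g x)
      = fun x => Complex.I * (((A x : ℝ) : ℂ) * g x) := by
    funext x; ring
  rw [hfun, fderiv_const_mulC hmul Complex.I v, fderiv_ofReal_mul hA hg v]
  ring

lemma Dcomm (hu : ContDiff ℝ (⊤ : ℕ∞) u) (he : ContDiff ℝ (⊤ : ℕ∞) e)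
    (husph : ∀ p, dot3 (u p) (u p) = 1) (henorm : ∀ p, dot3 (e p) (e p) = 1)
    (heu : ∀ p, dot3 (e p) (u p) = 0)
    {g : X → ℂ} (hg : ContDiff ℝ (⊤ : ℕ∞) g) (p v w : X) :
    (fderiv ℝ (fun x => fderiv ℝ g x w + Complex.I * ((Af u e w x : ℝ) : ℂ) * g x) p v
        + Complex.I * ((Af u e v p : ℝ) : ℂ)
          * (fderiv ℝ g p w + Complex.I * ((Af u e w p : ℝ) : ℂ) * g p))
      - (fderiv ℝ (fun x => fderiv ℝ g x v + Complex.I * ((Af u e v x : ℝ) : ℂ) * g x) p w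
        + Complex.I * ((Af u e w p : ℝ) : ℂ)
          * (fderiv ℝ g p v + Complex.I * ((Af u e v p : ℝ) : ℂ) * g p))
    = Complex.I * ((Sf u e v p * Rf u e w p - Sf u e w p * Rf u e v p : ℝ) : ℂ) * g p := by
  have hgd : ∀ z : X, DifferentiableAt ℝ (fun x => fderiv ℝ g x z) p :=
    fun z => dAt (contDiff_fderiv_apply hg z) p
  have hexp : ∀ z y : X,
      fderiv ℝ (fun x => fderiv ℝ g x z + Complex.I * ((Af u e z x : ℝ) : ℂ) * g x) p y
      = fderiv ℝ (fun x => fderiv ℝ g x z) p y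
        + Complex.I * ((fderiv ℝ (Af u e z) p y : ℝ) : ℂ) * g p
        + Complex.I * ((Af u e z p : ℝ) : ℂ) * fderiv ℝ g p y := by
    intro z y
    have hAz : DifferentiableAt ℝ (Af u e z) p := dAt (sm_A hu he z) p
    have hmul : DifferentiableAt ℝ (fun x => Complex.I * ((Af u e z x : ℝ) : ℂ) * g x) p := by
      have h1 : DifferentiableAt ℝ (fun x => ((Af u e z x : ℝ) : ℂ) * g x) p :=
        (Complex.ofRealCLM.differentiable.differentiableAt.comp p hAz).mul (dAt hg p)
      have hfun : (fun x => Complex.I * ((Af u e z x : ℝ) : ℂ) * g x)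
          = fun x => Complex.I * (((Af u e z x : ℝ) : ℂ) * g x) := by funext x; ring
      rw [hfun]; exact h1.const_mul Complex.I
    rw [fderiv_add_apply (hgd z) hmul y,
      fderiv_I_ofReal_mul hAz (dAt hg p) y]
    ring
  rw [hexp w v, hexp v w,
    fderiv_fderiv_symm hg p v w,
    M3 hu he husph henorm heu p v w, M3 hu he husph henorm heu p w v,
    Tsymm he p v w]
  push_cast
  ring
end Key

/-- a smooth Schrödinger map into `S²` together with an orthonormal
frame `{e, u × e}` of the pullback bundle produces a solution of the associated
gauge invariant Schrödinger system (GNLS). -/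
theorem gnls_from_schroedinger_map
    {d : ℕ} (hd : 1 ≤ d)
    (u e : ℝ × (Fin d → ℝ) → V3)
    (hu : ContDiff ℝ (⊤ : ℕ∞) u) (he : ContDiff ℝ (⊤ : ℕ∞) e)
    (husph : ∀ p, dot3 (u p) (u p) = 1)
    (henorm : ∀ p, dot3 (e p) (e p) = 1)
    (heu : ∀ p, dot3 (e p) (u p) = 0)
    (hSM : ∀ p, Dt u p = ∑ k, Dx k (fun p' => cross3 (u p') (Dx k u p')) p)
    (q : Fin (d + 1) → ℝ × (Fin d → ℝ) → ℂ)
    (a : Fin (d + 1) → ℝ × (Fin d → ℝ) → ℝ)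
    (hq : ∀ α p, q α p = (dot3 (pda α u p) (e p) : ℂ)
        + Complex.I * (dot3 (pda α u p) (cross3 (u p) (e p)) : ℂ))
    (ha : ∀ α p, a α p = dot3 (pda α e p) (cross3 (u p) (e p))) :
    -- (i)
    (∀ α p, pda α e p + (q α p).re • u p = a α p • cross3 (u p) (e p)) ∧
    -- (ii)
    (∀ p, q 0 p = Complex.I * ∑ ℓ : Fin d, covD a ℓ.succ (q ℓ.succ) p) ∧
    -- (iii)
    (∀ (ℓ : Fin d) (p : ℝ × (Fin d → ℝ)), covD a 0 (q ℓ.succ) p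
        = Complex.I * ∑ k : Fin d, covD a k.succ (covD a k.succ (q ℓ.succ)) p
          - ∑ k : Fin d, (cdot (q ℓ.succ p) (Complex.I * q k.succ p) : ℂ) * q k.succ p) ∧
    -- (iv)
    (∀ (k ℓ : Fin d) (p : ℝ × (Fin d → ℝ)),
        covD a ℓ.succ (q k.succ) p = covD a k.succ (q ℓ.succ) p) ∧
    -- (v)
    (∀ (ℓ j : Fin d) (p : ℝ × (Fin d → ℝ)),
        Dx ℓ (a j.succ) p - Dx j (a ℓ.succ) p
          = cdot (q ℓ.succ p) (Complex.I * q j.succ p)) ∧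
    -- (vi)
    (∀ (ℓ : Fin d) (p : ℝ × (Fin d → ℝ)),
        Dx ℓ (a 0) p - Dt (a ℓ.succ) p
          = - cdot (q ℓ.succ p) (∑ j : Fin d, covD a j.succ (q j.succ) p)) := by
  -- canonical forms
  have dirs : ∀ k : Fin d, dir d k.succ = ((0:ℝ), Pi.single k 1) := fun k => by
    simp [dir]
  have hqp : ∀ (α : Fin (d+1)) p, q α p
      = ((Rf u e (dir d α) p : ℝ) : ℂ) + Complex.I * ((Sf u e (dir d α) p : ℝ) : ℂ) :=
    fun α p => hq α p
  have hq' : ∀ α : Fin (d+1), q α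
      = fun p => ((Rf u e (dir d α) p : ℝ) : ℂ) + Complex.I * ((Sf u e (dir d α) p : ℝ) : ℂ) :=
    fun α => funext fun p => hqp α p
  have hap : ∀ (α : Fin (d+1)) p, a α p = Af u e (dir d α) p := fun α p => ha α p
  have ha' : ∀ α : Fin (d+1), a α = Af u e (dir d α) := fun α => funext fun p => hap α p
  -- the master formula for covD on the q's
  have key : ∀ (α β : Fin (d+1)) p, covD a β (q α) p
      = ((Uf u e (dir d β) (dir d α) p : ℝ) : ℂ)
        + Complex.I * ((Wf u e (dir d β) (dir d α) p : ℝ) : ℂ) := by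
    intro α β p
    show pda β (q α) p + Complex.I * ((a β p : ℝ) : ℂ) * q α p = _
    rw [hq' α, hap β]
    exact keyD hu he husph henorm heu p (dir d β) (dir d α)
  -- cdot formula
  have hcd : ∀ (γ δ : Fin (d+1)) (x : ℝ × (Fin d → ℝ)),
      cdot (q γ x) (Complex.I * q δ x)
        = Sf u e (dir d γ) x * Rf u e (dir d δ) x
          - Rf u e (dir d γ) x * Sf u e (dir d δ) x := by
    intro γ δ x
    rw [hqp γ x, hqp δ x]
    simp [cdot, Complex.mul_re, Complex.mul_im]
    try ring
  -- Part (i)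
  have part1 : ∀ α p, pda α e p + (q α p).re • u p = a α p • cross3 (u p) (e p) := by
    intro α p
    have hre : (q α p).re = Rf u e (dir d α) p := by rw [hqp α p]; simp
    rw [hre, hap α p]
    show fderiv ℝ e p (dir d α) + Rf u e (dir d α) p • u p
      = Af u e (dir d α) p • fr u e p
    rw [F7 hu he husph henorm heu p (dir d α)]
    module
  -- Part (iv)
  have part4 : ∀ (k ℓ : Fin d) (p : ℝ × (Fin d → ℝ)),
      covD a ℓ.succ (q k.succ) p = covD a k.succ (q ℓ.succ) p := by
    intro k ℓ p
    rw [key k.succ ℓ.succ p, key ℓ.succ k.succ p,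
      Usymm hu p (dir d ℓ.succ) (dir d k.succ), Wsymm hu p (dir d ℓ.succ) (dir d k.succ)]
  -- Part (v)
  have part5 : ∀ (ℓ j : Fin d) (p : ℝ × (Fin d → ℝ)),
      Dx ℓ (a j.succ) p - Dx j (a ℓ.succ) p
        = cdot (q ℓ.succ p) (Complex.I * q j.succ p) := by
    intro ℓ j p
    have h1 : Dx ℓ (a j.succ) p = fderiv ℝ (Af u e (dir d j.succ)) p (dir d ℓ.succ) := by
      rw [ha' j.succ]
      show fderiv ℝ (Af u e (dir d j.succ)) p ((0:ℝ), Pi.single ℓ 1) = _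
      rw [dirs ℓ]
    have h2 : Dx j (a ℓ.succ) p = fderiv ℝ (Af u e (dir d ℓ.succ)) p (dir d j.succ) := by
      rw [ha' ℓ.succ]
      show fderiv ℝ (Af u e (dir d ℓ.succ)) p ((0:ℝ), Pi.single j 1) = _
      rw [dirs j]
    rw [h1, h2, M3 hu he husph henorm heu p (dir d ℓ.succ) (dir d j.succ),
      M3 hu he husph henorm heu p (dir d j.succ) (dir d ℓ.succ),
      Tsymm he p (dir d ℓ.succ) (dir d j.succ), hcd ℓ.succ j.succ p]
    ring
  -- Part (ii)
  have part2 : ∀ p, q 0 p = Complex.I * ∑ ℓ : Fin d, covD a ℓ.succ (q ℓ.succ) p := by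
    intro p
    have hG : ∀ k : Fin d, (fun p' => cross3 (u p') (Dx k u p'))
        = fun p' => Rf u e (dir d k.succ) p' • fr u e p'
            - Sf u e (dir d k.succ) p' • e p' := by
      intro k
      funext p'
      have hDxu : Dx k u p' = fderiv ℝ u p' (dir d k.succ) := by
        show fderiv ℝ u p' ((0:ℝ), Pi.single k 1) = _
        rw [dirs k]
      rw [hDxu, F6 hu he husph henorm heu p' (dir d k.succ)]
      have hfr : fr u e p' = cross3 (u p') (e p') := rfl
      rw [cross3_add_right, cross3_smul_right, cross3_smul_right, hfr,
        cross3_ue (u p') (e p') (husph p') (heu p'), ← hfr]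
      module
    have hterm : ∀ k : Fin d, Dx k (fun p' => cross3 (u p') (Dx k u p')) p
        = Uf u e (dir d k.succ) (dir d k.succ) p • fr u e p
          - Wf u e (dir d k.succ) (dir d k.succ) p • e p := by
      intro k
      rw [hG k]
      have hstep : Dx k (fun p' => Rf u e (dir d k.succ) p' • fr u e p'
            - Sf u e (dir d k.succ) p' • e p') p
          = fderiv ℝ (fun p' => Rf u e (dir d k.succ) p' • fr u e p'
            - Sf u e (dir d k.succ) p' • e p') p (dir d k.succ) := by
        show fderiv ℝ _ p ((0:ℝ), Pi.single k 1) = _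
        rw [dirs k]
      rw [hstep,
        fderiv_sub_apply (dAt (f := fun p' => Rf u e (dir d k.succ) p' • fr u e p') ((sm_R hu he (dir d k.succ)).smul (sm_fr hu he)) p)
          (dAt (f := fun p' => Sf u e (dir d k.succ) p' • e p') ((sm_S hu he (dir d k.succ)).smul he) p),
        fderiv_smul3 (sm_R hu he (dir d k.succ)) (sm_fr hu he) p (dir d k.succ),
        fderiv_smul3 (sm_S hu he (dir d k.succ)) he p (dir d k.succ),
        M1 hu he husph henorm heu p (dir d k.succ) (dir d k.succ),
        M2 hu he husph henorm heu p (dir d k.succ) (dir d k.succ),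
        F7 hu he husph henorm heu p (dir d k.succ),
        F8 hu he husph henorm heu p (dir d k.succ)]
      module
    have hsm' : Rf u e (dir d 0) p • e p + Sf u e (dir d 0) p • fr u e p
        = ∑ k : Fin d, (Uf u e (dir d k.succ) (dir d k.succ) p • fr u e p
            - Wf u e (dir d k.succ) (dir d k.succ) p • e p) := by
      have h0 := hSM p
      have hDtu : Dt u p = fderiv ℝ u p (dir d 0) := rfl
      rw [hDtu, F6 hu he husph henorm heu p (dir d 0)] at h0
      rw [h0]
      exact Finset.sum_congr rfl fun k _ => hterm k
    -- extract coordinates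
    have horth1 : dot3 (fr u e p) (e p) = 0 := dot3_cross_e (u p) (e p)
    have horth2 : dot3 (fr u e p) (fr u e p) = 1 :=
      dot3_cross_self (u p) (e p) (husph p) (henorm p) (heu p)
    have hRe : Rf u e (dir d 0) p
        = ∑ k : Fin d, (- Wf u e (dir d k.succ) (dir d k.succ) p) := by
      have h := congrArg (fun w => dot3 w (e p)) hsm'
      simp only [dot3_sum_left] at h
      rw [dot3_comm _ (e p), dot3_add_right, dot3_smul_right, dot3_smul_right,
        henorm p, dot3_comm (e p) (fr u e p), horth1] at h
      rw [show Rf u e (dir d 0) p = Rf u e (dir d 0) p * 1 + Sf u e (dir d 0) p * 0 by ring, h]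
      refine Finset.sum_congr rfl fun k _ => ?_
      rw [sub_eq_add_neg, dot3_comm _ (e p), dot3_add_right, dot3_smul_right]
      have : dot3 (e p) (-(Wf u e (dir d k.succ) (dir d k.succ) p • e p))
          = - (Wf u e (dir d k.succ) (dir d k.succ) p) := by
        rw [show -(Wf u e (dir d k.succ) (dir d k.succ) p • e p)
            = (- Wf u e (dir d k.succ) (dir d k.succ) p) • e p by module,
          dot3_smul_right, henorm p]
        ring
      rw [this, dot3_comm (e p) (fr u e p), horth1]
      ring
    have hSe : Sf u e (dir d 0) p
        = ∑ k : Fin d, Uf u e (dir d k.succ) (dir d k.succ) p := by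
      have h := congrArg (fun w => dot3 w (fr u e p)) hsm'
      simp only [dot3_sum_left] at h
      rw [dot3_comm _ (fr u e p), dot3_add_right, dot3_smul_right, dot3_smul_right,
        horth2, dot3_comm (fr u e p) (e p)] at h
      rw [dot3_comm (e p) (fr u e p), horth1] at h
      rw [show Sf u e (dir d 0) p = Rf u e (dir d 0) p * 0 + Sf u e (dir d 0) p * 1 by ring, h]
      refine Finset.sum_congr rfl fun k _ => ?_
      rw [sub_eq_add_neg, dot3_comm _ (fr u e p), dot3_add_right, dot3_smul_right]
      have : dot3 (fr u e p) (-(Wf u e (dir d k.succ) (dir d k.succ) p • e p))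
          = 0 := by
        rw [show -(Wf u e (dir d k.succ) (dir d k.succ) p • e p)
            = (- Wf u e (dir d k.succ) (dir d k.succ) p) • e p by module,
          dot3_smul_right, dot3_comm (fr u e p) (e p)]
        rw [dot3_comm (e p) (fr u e p), horth1]
        ring
      rw [this, horth2]
      ring
    -- assemble
    rw [hqp 0 p]
    have hkey : ∀ k : Fin d, covD a k.succ (q k.succ) p
        = ((Uf u e (dir d k.succ) (dir d k.succ) p : ℝ) : ℂ)
          + Complex.I * ((Wf u e (dir d k.succ) (dir d k.succ) p : ℝ) : ℂ) :=
      fun k => key k.succ k.succ p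
    rw [show (∑ x : Fin d, covD a x.succ (q x.succ) p)
        = ∑ k : Fin d, (((Uf u e (dir d k.succ) (dir d k.succ) p : ℝ) : ℂ)
          + Complex.I * ((Wf u e (dir d k.succ) (dir d k.succ) p : ℝ) : ℂ))
      from Finset.sum_congr rfl fun k _ => hkey k]
    rw [hRe, hSe]
    push_cast
    rw [Finset.mul_sum, Finset.mul_sum, ← Finset.sum_add_distrib]
    refine Finset.sum_congr rfl fun k _ => ?_
    linear_combination (-((Wf u e (dir d k.succ) (dir d k.succ) p : ℝ) : ℂ)) * Complex.I_sq
  refine ⟨part1, part2, ?_, part4, part5, ?_⟩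
  · -- Part (iii)
    intro ℓ p
    have hcovfun : ∀ k : Fin d, covD a k.succ (q k.succ)
        = fun x => ((Uf u e (dir d k.succ) (dir d k.succ) x : ℝ) : ℂ)
          + Complex.I * ((Wf u e (dir d k.succ) (dir d k.succ) x : ℝ) : ℂ) :=
      fun k => funext fun x => key k.succ k.succ x
    have smcov : ∀ k : Fin d, ContDiff ℝ (⊤ : ℕ∞) (covD a k.succ (q k.succ)) := by
      intro k
      rw [hcovfun k]
      exact (Complex.ofRealCLM.contDiff.comp (sm_U hu he _ _)).add
        (contDiff_const.mul (Complex.ofRealCLM.contDiff.comp (sm_W hu he _ _)))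
    have smq' : ∀ α : Fin (d+1), ContDiff ℝ (⊤ : ℕ∞) (q α) := by
      intro α; rw [hq' α]; exact smq hu he _
    have hq0fun : q 0 = fun x => Complex.I * ∑ k : Fin d, covD a k.succ (q k.succ) x :=
      funext part2
    have step1 : covD a 0 (q ℓ.succ) p = covD a ℓ.succ (q 0) p := by
      rw [key ℓ.succ 0 p, key 0 ℓ.succ p, Usymm hu p (dir d 0) (dir d ℓ.succ),
        Wsymm hu p (dir d 0) (dir d ℓ.succ)]
    have step2 : covD a ℓ.succ (q 0) p
        = Complex.I * ∑ k : Fin d, covD a ℓ.succ (covD a k.succ (q k.succ)) p := by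
      have hdiff : ∀ k ∈ (Finset.univ : Finset (Fin d)),
          DifferentiableAt ℝ (covD a k.succ (q k.succ)) p := fun k _ => dAt (smcov k) p
      have hsum_d : DifferentiableAt ℝ
          (fun x => ∑ k : Fin d, covD a k.succ (q k.succ) x) p := by
        apply DifferentiableAt.fun_sum hdiff
      have hpda : pda ℓ.succ (q 0) p
          = Complex.I * ∑ k : Fin d,
              fderiv ℝ (covD a k.succ (q k.succ)) p (dir d ℓ.succ) := by
        show fderiv ℝ (q 0) p (dir d ℓ.succ) = _
        rw [hq0fun, fderiv_const_mulC hsum_d Complex.I (dir d ℓ.succ),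
          fderiv_sum_apply' Finset.univ hdiff (dir d ℓ.succ)]
      show pda ℓ.succ (q 0) p + Complex.I * ((a ℓ.succ p : ℝ) : ℂ) * q 0 p = _
      rw [hpda, part2 p]
      rw [show (∑ k : Fin d, covD a ℓ.succ (covD a k.succ (q k.succ)) p)
          = ∑ k : Fin d, (fderiv ℝ (covD a k.succ (q k.succ)) p (dir d ℓ.succ)
            + Complex.I * ((a ℓ.succ p : ℝ) : ℂ) * covD a k.succ (q k.succ) p)
        from Finset.sum_congr rfl fun k _ => rfl]
      rw [Finset.sum_add_distrib, ← Finset.mul_sum]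
      ring
    have step3 : ∀ k : Fin d, covD a ℓ.succ (covD a k.succ (q k.succ)) p
        = covD a k.succ (covD a k.succ (q ℓ.succ)) p
          + Complex.I * ((cdot (q ℓ.succ p) (Complex.I * q k.succ p) : ℝ) : ℂ)
            * q k.succ p := by
      intro k
      have hfun : covD a k.succ (q k.succ)
          = fun x => fderiv ℝ (q k.succ) x (dir d k.succ)
            + Complex.I * ((Af u e (dir d k.succ) x : ℝ) : ℂ) * q k.succ x := by
        funext x
        show pda k.succ (q k.succ) x + Complex.I * ((a k.succ x : ℝ) : ℂ) * q k.succ x = _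
        rw [hap k.succ x]; rfl
      have hfun' : covD a ℓ.succ (q k.succ)
          = fun x => fderiv ℝ (q k.succ) x (dir d ℓ.succ)
            + Complex.I * ((Af u e (dir d ℓ.succ) x : ℝ) : ℂ) * q k.succ x := by
        funext x
        show pda ℓ.succ (q k.succ) x + Complex.I * ((a ℓ.succ x : ℝ) : ℂ) * q k.succ x = _
        rw [hap ℓ.succ x]; rfl
      have hDc := Dcomm hu he husph henorm heu (smq' k.succ) p (dir d ℓ.succ) (dir d k.succ)
      have hA : covD a ℓ.succ (covD a k.succ (q k.succ)) p
          = fderiv ℝ (fun x => fderiv ℝ (q k.succ) x (dir d k.succ)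
              + Complex.I * ((Af u e (dir d k.succ) x : ℝ) : ℂ) * q k.succ x) p (dir d ℓ.succ)
            + Complex.I * ((Af u e (dir d ℓ.succ) p : ℝ) : ℂ)
              * (fderiv ℝ (q k.succ) p (dir d k.succ)
                + Complex.I * ((Af u e (dir d k.succ) p : ℝ) : ℂ) * q k.succ p) := by
        show fderiv ℝ (covD a k.succ (q k.succ)) p (dir d ℓ.succ)
            + Complex.I * ((a ℓ.succ p : ℝ) : ℂ) * covD a k.succ (q k.succ) p = _
        rw [show covD a k.succ (q k.succ) p
            = fderiv ℝ (q k.succ) p (dir d k.succ)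
              + Complex.I * ((Af u e (dir d k.succ) p : ℝ) : ℂ) * q k.succ p
          from congrFun hfun p]
        rw [hfun, hap ℓ.succ p]
      have hB : covD a k.succ (covD a ℓ.succ (q k.succ)) p
          = fderiv ℝ (fun x => fderiv ℝ (q k.succ) x (dir d ℓ.succ)
              + Complex.I * ((Af u e (dir d ℓ.succ) x : ℝ) : ℂ) * q k.succ x) p (dir d k.succ)
            + Complex.I * ((Af u e (dir d k.succ) p : ℝ) : ℂ)
              * (fderiv ℝ (q k.succ) p (dir d ℓ.succ)
                + Complex.I * ((Af u e (dir d ℓ.succ) p : ℝ) : ℂ) * q k.succ p) := by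
        show fderiv ℝ (covD a ℓ.succ (q k.succ)) p (dir d k.succ)
            + Complex.I * ((a k.succ p : ℝ) : ℂ) * covD a ℓ.succ (q k.succ) p = _
        rw [show covD a ℓ.succ (q k.succ) p
            = fderiv ℝ (q k.succ) p (dir d ℓ.succ)
              + Complex.I * ((Af u e (dir d ℓ.succ) p : ℝ) : ℂ) * q k.succ p
          from congrFun hfun' p]
        rw [hfun', hap k.succ p]
      have hswap : covD a ℓ.succ (q k.succ) = covD a k.succ (q ℓ.succ) :=
        funext fun x => part4 k ℓ x
      have hcomm : covD a ℓ.succ (covD a k.succ (q k.succ)) p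
          - covD a k.succ (covD a ℓ.succ (q k.succ)) p
          = Complex.I * ((Sf u e (dir d ℓ.succ) p * Rf u e (dir d k.succ) p
              - Sf u e (dir d k.succ) p * Rf u e (dir d ℓ.succ) p : ℝ) : ℂ)
            * q k.succ p := by
        rw [hA, hB]
        exact hDc
      rw [← hswap, hcd ℓ.succ k.succ p]
      rw [show covD a k.succ (covD a ℓ.succ (q k.succ)) p
          = covD a ℓ.succ (covD a k.succ (q k.succ)) p
            - Complex.I * ((Sf u e (dir d ℓ.succ) p * Rf u e (dir d k.succ) p
              - Sf u e (dir d k.succ) p * Rf u e (dir d ℓ.succ) p : ℝ) : ℂ)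
              * q k.succ p from by linear_combination -hcomm]
      push_cast
      ring
    rw [step1, step2,
      show (∑ k : Fin d, covD a ℓ.succ (covD a k.succ (q k.succ)) p)
        = ∑ k : Fin d, (covD a k.succ (covD a k.succ (q ℓ.succ)) p
          + Complex.I * ((cdot (q ℓ.succ p) (Complex.I * q k.succ p) : ℝ) : ℂ)
            * q k.succ p)
      from Finset.sum_congr rfl fun k _ => step3 k]
    rw [Finset.sum_add_distrib, mul_add, sub_eq_add_neg, ← Finset.sum_neg_distrib]
    congr 1
    rw [Finset.mul_sum]
    refine Finset.sum_congr rfl fun k _ => ?_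
    linear_combination ((cdot (q ℓ.succ p) (Complex.I * q k.succ p) : ℝ) : ℂ)
      * q k.succ p * Complex.I_sq
  · -- Part (vi)
    intro ℓ p
    have hsum : ∑ j : Fin d, covD a j.succ (q j.succ) p = - Complex.I * q 0 p := by
      have h2 := part2 p
      linear_combination Complex.I * h2
        + (∑ j : Fin d, covD a j.succ (q j.succ) p) * Complex.I_sq
    have h1 : Dx ℓ (a 0) p = fderiv ℝ (Af u e (dir d 0)) p (dir d ℓ.succ) := by
      rw [ha' 0]
      show fderiv ℝ (Af u e (dir d 0)) p ((0:ℝ), Pi.single ℓ 1) = _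
      rw [dirs ℓ]
    have h2 : Dt (a ℓ.succ) p = fderiv ℝ (Af u e (dir d ℓ.succ)) p (dir d 0) := by
      rw [ha' ℓ.succ]; rfl
    rw [h1, h2, M3 hu he husph henorm heu p (dir d ℓ.succ) (dir d 0),
      M3 hu he husph henorm heu p (dir d 0) (dir d ℓ.succ),
      Tsymm he p (dir d ℓ.succ) (dir d 0), hsum, hqp ℓ.succ p, hqp 0 p]
    simp [cdot, Complex.mul_re, Complex.mul_im]
    try ring
end
end

section
/- Let u : [0,T] × ℝ^d → ℍ² be a smooth solution of the Schrödinger map equation ∂_t u = η Σ_{k=1}^d ∂_k ( u × ∂_k u ) such that u(t,·) − (1,0,0) is Schwartz in x (uniformly on compact t-intervals). Then both the quantity ∫_{ℝ^d} ( u_0(t,x) − 1 ) dx (u_0 the first component of u) and the energy ∫_{ℝ^d} ‖∇u(t,x)‖² dx are independent of t ∈ [0,T]. -/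
noncomputable section
open MeasureTheory Filter Topology

/-- The Lorentz metric `η = diag(−1,1,1)` applied to a vector. -/
def etaV (v : V3) : V3 := fun i => if i = 0 then -v i else v i

/-- Lorentz pairing `⟨v, ηw⟩ = −v₀w₀ + v₁w₁ + v₂w₂`. -/
def mdot (v w : V3) : ℝ := -(v 0 * w 0) + v 1 * w 1 + v 2 * w 2

variable {d : ℕ}

abbrev X (d : ℕ) := Fin d → ℝ

namespace SMaux
open MeasureTheory Filter Topology Set Metric


lemma norm_cross_le (v w : V3) : ‖cross3 v w‖ ≤ 2 * ‖v‖ * ‖w‖ := by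
  apply pi_norm_le_iff_of_nonneg (by positivity) |>.2
  intro i
  have hv : ∀ j, |v j| ≤ ‖v‖ := fun j => norm_le_pi_norm v j
  have hw : ∀ j, |w j| ≤ ‖w‖ := fun j => norm_le_pi_norm w j
  have hb : ∀ a b c e : Fin 3, |v a * w b - v c * w e| ≤ 2 * ‖v‖ * ‖w‖ := by
    intro a b c e
    calc |v a * w b - v c * w e| ≤ |v a * w b| + |v c * w e| := abs_sub _ _
    _ = |v a| * |w b| + |v c| * |w e| := by rw [abs_mul, abs_mul]
    _ ≤ ‖v‖ * ‖w‖ + ‖v‖ * ‖w‖ := by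
        gcongr <;> first | exact hv _ | exact hw _ | exact norm_nonneg _
    _ = 2 * ‖v‖ * ‖w‖ := by ring
  fin_cases i <;> simpa [cross3, crossProduct] using hb _ _ _ _

lemma abs_mdot_le (v w : V3) : |mdot v w| ≤ 3 * ‖v‖ * ‖w‖ := by
  have hv : ∀ j, |v j| ≤ ‖v‖ := fun j => norm_le_pi_norm v j
  have hw : ∀ j, |w j| ≤ ‖w‖ := fun j => norm_le_pi_norm w j
  have h : ∀ a b : Fin 3, |v a * w b| ≤ ‖v‖ * ‖w‖ := by
    intro a b; rw [abs_mul]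
    exact mul_le_mul (hv a) (hw b) (abs_nonneg _) (norm_nonneg _)
  calc |mdot v w| ≤ |-(v 0 * w 0)| + |v 1 * w 1| + |v 2 * w 2| := by
        unfold mdot; exact (abs_add_le _ _).trans (by gcongr; exact abs_add_le _ _)
  _ ≤ ‖v‖ * ‖w‖ + ‖v‖ * ‖w‖ + ‖v‖ * ‖w‖ := by
      rw [abs_neg]; gcongr <;> exact h _ _
  _ = 3 * ‖v‖ * ‖w‖ := by ring

/-- cross product as a continuous bilinear map -/
def crossL : V3 →L[ℝ] V3 →L[ℝ] V3 :=
  LinearMap.mkContinuous₂ (crossProduct) 2 (fun v w => norm_cross_le v w)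

@[simp] lemma crossL_apply (v w : V3) : crossL v w = cross3 v w := rfl

def mdotLM : V3 →ₗ[ℝ] V3 →ₗ[ℝ] ℝ :=
  LinearMap.mk₂ ℝ mdot
    (fun a b c => by unfold mdot; simp [Pi.add_apply]; ring)
    (fun r a b => by unfold mdot; simp [Pi.smul_apply, smul_eq_mul]; ring)
    (fun a b c => by unfold mdot; simp [Pi.add_apply]; ring)
    (fun r a b => by unfold mdot; simp [Pi.smul_apply, smul_eq_mul]; ring)

def mdotL : V3 →L[ℝ] V3 →L[ℝ] ℝ :=
  LinearMap.mkContinuous₂ mdotLM 3 (fun v w => by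
    rw [Real.norm_eq_abs]; exact abs_mdot_le v w)

@[simp] lemma mdotL_apply (v w : V3) : mdotL v w = mdot v w := rfl

def etaLM : V3 →ₗ[ℝ] V3 where
  toFun := etaV
  map_add' a b := by funext i; simp only [etaV, Pi.add_apply]; split_ifs <;> ring
  map_smul' r a := by funext i; simp only [etaV, Pi.smul_apply, smul_eq_mul, RingHom.id_apply]; split_ifs <;> ring

lemma norm_etaV_le (v : V3) : ‖etaV v‖ ≤ 1 * ‖v‖ := by
  rw [one_mul]
  apply pi_norm_le_iff_of_nonneg (norm_nonneg _) |>.2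
  intro i
  have := norm_le_pi_norm v i
  simp only [etaV]; split_ifs <;> simpa using this

def etaL : V3 →L[ℝ] V3 := LinearMap.mkContinuous etaLM 1 norm_etaV_le

@[simp] lemma etaL_apply (v : V3) : etaL v = etaV v := rfl


variable {E F G W : Type*} [NormedAddCommGroup E] [NormedSpace ℝ E]
  [NormedAddCommGroup F] [NormedSpace ℝ F] [NormedAddCommGroup G] [NormedSpace ℝ G]
  [NormedAddCommGroup W] [NormedSpace ℝ W]

/-- the inclusion `y ↦ (t, y)` has derivative `inr`. -/
lemma hasFDerivAt_mkt (t : ℝ) (x : X d) :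
    HasFDerivAt (fun y : X d => ((t, y) : ℝ × X d))
      (ContinuousLinearMap.inr ℝ ℝ (X d)) x := by
  have h := (ContinuousLinearMap.inr ℝ ℝ (X d)).hasFDerivAt (x := x) |>.const_add ((t, 0) : ℝ × X d)
  have he : (fun y : X d => ((t, y) : ℝ × X d))
      = fun y => ((t, 0) : ℝ × X d) + (ContinuousLinearMap.inr ℝ ℝ (X d)) y := by
    funext y; simp [Prod.ext_iff]
  rw [he]; exact h

lemma hasFDerivAt_slice {f : ℝ × X d → E} {t : ℝ} {x : X d} (hf : DifferentiableAt ℝ f (t, x)) :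
    HasFDerivAt (fun y => f (t, y))
      ((fderiv ℝ f (t, x)).comp (ContinuousLinearMap.inr ℝ ℝ (X d))) x :=
  (hf.hasFDerivAt).comp x (hasFDerivAt_mkt t x)

/-- `Dx` is the derivative of the spatial slice. -/
lemma dx_slice {f : ℝ × X d → E} {t : ℝ} {x : X d} (hf : DifferentiableAt ℝ f (t, x)) (k : Fin d) :
    Dx k f (t, x) = fderiv ℝ (fun y => f (t, y)) x (Pi.single k 1) := by
  rw [(hasFDerivAt_slice hf).fderiv]; rfl

/-- Two functions agreeing on a time slice have the same spatial derivatives there. -/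
lemma dx_congr_slice {f g : ℝ × X d → E} {t : ℝ} {x : X d}
    (hf : DifferentiableAt ℝ f (t, x)) (hg : DifferentiableAt ℝ g (t, x))
    (h : ∀ y, f (t, y) = g (t, y)) (k : Fin d) :
    Dx k f (t, x) = Dx k g (t, x) := by
  rw [dx_slice hf k, dx_slice hg k]
  congr 1
  exact congrArg (fun F => fderiv ℝ F x) (funext h)

/-- time-sections: `t ↦ f (t,x)` has derivative `Dt f`. -/
lemma hasDerivAt_tslice {f : ℝ × X d → E} {t : ℝ} {x : X d} (hf : DifferentiableAt ℝ f (t, x)) :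
    HasDerivAt (fun τ => f (τ, x)) (Dt f (t, x)) t := by
  have h1 : HasDerivAt (fun τ : ℝ => ((τ, x) : ℝ × X d)) (1, 0) t := by
    have h := ((ContinuousLinearMap.inl ℝ ℝ (X d)).hasDerivAt (x := t)).const_add ((0, x) : ℝ × X d)
    have he : (fun τ : ℝ => ((τ, x) : ℝ × X d))
        = fun τ : ℝ => ((0 : ℝ), x) + (ContinuousLinearMap.inl ℝ ℝ (X d)) τ := by
      funext τ; simp [Prod.ext_iff]
    rw [he]
    exact h
  exact (hf.hasFDerivAt.comp_hasDerivAt t h1 : HasDerivAt _ _ t)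

/-- directional derivative of a bilinear expression. -/
lemma fderiv_bilin_apply {H : Type*} [NormedAddCommGroup H] [NormedSpace ℝ H]
    (B : F →L[ℝ] G →L[ℝ] W) {f : H → F} {g : H → G}
    {p : H} (hf : DifferentiableAt ℝ f p) (hg : DifferentiableAt ℝ g p) (v : H) :
    fderiv ℝ (fun q => B (f q) (g q)) p v
      = B (fderiv ℝ f p v) (g p) + B (f p) (fderiv ℝ g p v) := by
  have hB : HasFDerivAt (fun q => B (f q) (g q))
      ((B.isBoundedBilinearMap.deriv (f p, g p)).comp ((fderiv ℝ f p).prod (fderiv ℝ g p))) p := by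
    have := (B.isBoundedBilinearMap.hasFDerivAt (f p, g p)).comp p
      ((hf.hasFDerivAt).prodMk (hg.hasFDerivAt))
    exact this
  rw [hB.fderiv]
  simp only [ContinuousLinearMap.coe_comp', Function.comp_apply, ContinuousLinearMap.prod_apply,
    IsBoundedBilinearMap.deriv_apply]
  abel

/-- directional derivative of a CLM applied to a function. -/
lemma fderiv_clm_comp_apply {H : Type*} [NormedAddCommGroup H] [NormedSpace ℝ H]
    (A : F →L[ℝ] W) {f : H → F} {p : H}
    (hf : DifferentiableAt ℝ f p) (v : H) :
    fderiv ℝ (fun q => A (f q)) p v = A (fderiv ℝ f p v) := by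
  rw [show (fun q => A (f q)) = A ∘ f from rfl, (A.hasFDerivAt.comp p hf.hasFDerivAt).fderiv]; rfl

/-- `fun p => fderiv f p v` is smooth when `f` is. -/
lemma contDiff_fderiv_apply {f : ℝ × X d → E} (hf : ContDiff ℝ (⊤ : ℕ∞) f) (v : ℝ × X d) :
    ContDiff ℝ (⊤ : ℕ∞) (fun p => fderiv ℝ f p v) :=
  (hf.fderiv_right (m := (⊤ : ℕ∞)) (by simp)).clm_apply contDiff_const

lemma contDiff_Dx {f : ℝ × X d → E} (hf : ContDiff ℝ (⊤ : ℕ∞) f) (k : Fin d) :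
    ContDiff ℝ (⊤ : ℕ∞) (Dx k f) := contDiff_fderiv_apply hf _

lemma contDiff_Dt {f : ℝ × X d → E} (hf : ContDiff ℝ (⊤ : ℕ∞) f) :
    ContDiff ℝ (⊤ : ℕ∞) (Dt f) := contDiff_fderiv_apply hf _

/-- Clairaut for `Dt`/`Dx`. -/
lemma dt_dx_comm {f : ℝ × X d → E} (hf : ContDiff ℝ (⊤ : ℕ∞) f) (k : Fin d) (p : ℝ × X d) :
    Dt (Dx k f) p = Dx k (Dt f) p := by
  have hsymm := second_derivative_symmetric
    (f' := fderiv ℝ f) (f'' := fderiv ℝ (fderiv ℝ f) p) (f := f)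
    (fun y => (hf.differentiable (by simp) y).hasFDerivAt)
    (((hf.fderiv_right (m := (⊤ : ℕ∞)) (by simp)).differentiable (by simp) p).hasFDerivAt)
    (1, 0) (0, Pi.single k 1)
  have h1 : Dt (Dx k f) p = fderiv ℝ (fderiv ℝ f) p (1,0) (0, Pi.single k 1) := by
    unfold Dt Dx
    rw [show (fun q => fderiv ℝ f q (0, Pi.single k 1))
        = fun q => (ContinuousLinearMap.apply ℝ E ((0, Pi.single k 1) : ℝ × X d)) (fderiv ℝ f q) from rfl]
    rw [fderiv_clm_comp_apply _ ((hf.fderiv_right (m := (⊤ : ℕ∞)) (by simp)).differentiable (by simp) p)]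
    rfl
  have h2 : Dx k (Dt f) p = fderiv ℝ (fderiv ℝ f) p (0, Pi.single k 1) (1,0) := by
    unfold Dt Dx
    rw [show (fun q => fderiv ℝ f q ((1,0) : ℝ × X d))
        = fun q => (ContinuousLinearMap.apply ℝ E ((1, 0) : ℝ × X d)) (fderiv ℝ f q) from rfl]
    rw [fderiv_clm_comp_apply _ ((hf.fderiv_right (m := (⊤ : ℕ∞)) (by simp)).differentiable (by simp) p)]
    rfl
  rw [h1, h2, hsymm]


variable {H E : Type*} [NormedAddCommGroup H] [NormedSpace ℝ H]
  [NormedAddCommGroup E] [NormedSpace ℝ E]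

lemma norm_fd1 (f : H → E) (x v : H) :
    ‖fderiv ℝ f x v‖ ≤ ‖iteratedFDeriv ℝ 1 f x‖ * ‖v‖ := by
  calc ‖fderiv ℝ f x v‖ ≤ ‖fderiv ℝ f x‖ * ‖v‖ := (fderiv ℝ f x).le_opNorm v
  _ = ‖iteratedFDeriv ℝ 1 f x‖ * ‖v‖ := by
      rw [← norm_iteratedFDeriv_fderiv, norm_iteratedFDeriv_zero]

lemma norm_fd2 (f : H → E) (x v w : H) :
    ‖fderiv ℝ (fderiv ℝ f) x v w‖ ≤ ‖iteratedFDeriv ℝ 2 f x‖ * ‖v‖ * ‖w‖ := by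
  calc ‖fderiv ℝ (fderiv ℝ f) x v w‖ ≤ ‖fderiv ℝ (fderiv ℝ f) x v‖ * ‖w‖ :=
      (fderiv ℝ (fderiv ℝ f) x v).le_opNorm w
  _ ≤ ‖fderiv ℝ (fderiv ℝ f) x‖ * ‖v‖ * ‖w‖ := by
      gcongr; exact (fderiv ℝ (fderiv ℝ f) x).le_opNorm v
  _ = ‖iteratedFDeriv ℝ 2 f x‖ * ‖v‖ * ‖w‖ := by
      rw [← norm_iteratedFDeriv_fderiv, ← norm_iteratedFDeriv_fderiv,
        norm_iteratedFDeriv_zero]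

lemma norm_fd3 (f : H → E) (x a b c : H) :
    ‖fderiv ℝ (fderiv ℝ (fderiv ℝ f)) x a b c‖
      ≤ ‖iteratedFDeriv ℝ 3 f x‖ * ‖a‖ * ‖b‖ * ‖c‖ := by
  letI : NormedAddCommGroup (H →L[ℝ] H →L[ℝ] E) := inferInstance
  letI : NormedSpace ℝ (H →L[ℝ] H →L[ℝ] E) := inferInstance
  calc ‖fderiv ℝ (fderiv ℝ (fderiv ℝ f)) x a b c‖
      ≤ ‖fderiv ℝ (fderiv ℝ (fderiv ℝ f)) x a b‖ * ‖c‖ :=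
      ContinuousLinearMap.le_opNorm _ c
  _ ≤ ‖fderiv ℝ (fderiv ℝ (fderiv ℝ f)) x a‖ * ‖b‖ * ‖c‖ := by
      gcongr; exact ContinuousLinearMap.le_opNorm _ b
  _ ≤ ‖fderiv ℝ (fderiv ℝ (fderiv ℝ f)) x‖ * ‖a‖ * ‖b‖ * ‖c‖ := by
      gcongr; exact ContinuousLinearMap.le_opNorm _ a
  _ = ‖iteratedFDeriv ℝ 3 f x‖ * ‖a‖ * ‖b‖ * ‖c‖ := by
      rw [← norm_iteratedFDeriv_fderiv, ← norm_iteratedFDeriv_fderiv,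
        ← norm_iteratedFDeriv_fderiv, norm_iteratedFDeriv_zero]

/-- integral of a directional derivative of a nice function vanishes -/
lemma integral_fderiv_eq_zero {d : ℕ} (G : (Fin d → ℝ) → ℝ) (v : Fin d → ℝ)
    (hG : Differentiable ℝ G) (hGi : Integrable G)
    (hG'i : Integrable (fun x => fderiv ℝ G x v)) :
    ∫ x : Fin d → ℝ, fderiv ℝ G x v = 0 := by
  have h := integral_smul_fderiv_eq_neg_fderiv_smul_of_integrable
    (μ := (volume : Measure (Fin d → ℝ)))
    (f := fun _ : Fin d → ℝ => (1:ℝ)) (g := G) (v := v)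
    ?_ ?_ ?_ (fun x _ => differentiableAt_const _) (fun x _ => hG x)
  · simpa using h
  · simp [fderiv_const]
  · simpa using hG'i
  · simpa using hGi

lemma const_on_Icc {F : ℝ → ℝ} {T : ℝ} (hT : 0 < T)
    (hc : ContinuousOn F (Set.Icc 0 T))
    (hd : ∀ t ∈ Set.Ioo 0 T, HasDerivAt F 0 t) :
    ∀ t ∈ Set.Icc 0 T, F t = F 0 := by
  have key : ∀ a ∈ Ioo 0 T, ∀ b ∈ Ioo 0 T, a ≤ b → F b = F a := by
    intro a ha b hb hab
    have hcont : ContinuousOn F (Icc a b) := hc.mono (Icc_subset_Icc ha.1.le hb.2.le)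
    have hder : ∀ x ∈ Ico a b, HasDerivWithinAt F 0 (Ici x) x := fun x hx =>
      (hd x ⟨lt_of_lt_of_le ha.1 hx.1, lt_of_le_of_lt hx.2.le hb.2⟩).hasDerivWithinAt
    exact constant_of_has_deriv_right_zero hcont hder b (right_mem_Icc.2 hab)
  have hkey' : ∀ s ∈ Ioo 0 T, F s = F (T/2) := by
    intro s hs
    have hc2 : T/2 ∈ Ioo 0 T := ⟨by linarith, by linarith⟩
    rcases le_total s (T/2) with h | h
    · exact (key s hs (T/2) hc2 h).symm
    · exact key (T/2) hc2 s hs h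
  have hlim : ∀ (z : ℝ), z ∈ Icc 0 T → (𝓝[Ioo 0 T] z).NeBot → F z = F (T/2) := by
    intro z hz hne
    have h1 : Tendsto F (𝓝[Ioo 0 T] z) (𝓝 (F z)) :=
      ((hc z hz).mono Ioo_subset_Icc_self).tendsto
    have h2 : Tendsto F (𝓝[Ioo 0 T] z) (𝓝 (F (T/2))) := by
      apply Tendsto.congr' _ tendsto_const_nhds
      filter_upwards [self_mem_nhdsWithin] with s hs
      exact (hkey' s hs).symm
    exact tendsto_nhds_unique h1 h2
  have h0 : F 0 = F (T/2) := by
    apply hlim 0 (left_mem_Icc.2 hT.le)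
    rw [nhdsWithin_Ioo_eq_nhdsGT hT]; infer_instance
  intro t ht
  rcases eq_or_lt_of_le ht.1 with h | h
  · rw [← h]
  rcases eq_or_lt_of_le ht.2 with h' | h'
  · rw [h']
    have hTlim : F T = F (T/2) := by
      apply hlim T (right_mem_Icc.2 hT.le)
      rw [nhdsWithin_Ioo_eq_nhdsLT hT]; infer_instance
    rw [hTlim, h0]
  · rw [hkey' t ⟨h, h'⟩, h0]


open MeasureTheory Filter Topology Set Metric

variable {d : ℕ}

/-- Master conservation lemma: if `∂_t f = ∑_k ∂_k g_k` on the slab, with uniform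
integrable domination, then `∫ f (t, ·)` is constant on `[0,T]`. -/
lemma conserved (T : ℝ) (hT : 0 < T)
    (f : ℝ × X d → ℝ) (hf : ContDiff ℝ (⊤ : ℕ∞) f)
    (g : Fin d → (ℝ × X d → ℝ)) (hg : ∀ k, ContDiff ℝ (⊤ : ℕ∞) (g k))
    (hdiv : ∀ p : ℝ × X d, p.1 ∈ Icc 0 T → Dt f p = ∑ k, Dx k (g k) p)
    (bound : X d → ℝ) (hbi : Integrable bound)
    (hfb : ∀ t ∈ Icc 0 T, ∀ x, |f (t,x)| ≤ bound x)
    (hftb : ∀ t ∈ Icc 0 T, ∀ x, |Dt f (t,x)| ≤ bound x)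
    (hgb : ∀ k, ∀ t ∈ Icc 0 T, ∀ x, |g k (t,x)| ≤ bound x)
    (hgdb : ∀ k, ∀ t ∈ Icc 0 T, ∀ x, |Dx k (g k) (t,x)| ≤ bound x) :
    ∀ t ∈ Icc 0 T, (∫ x, f (t,x)) = ∫ x, f (0,x) := by
  have hmeas : ∀ t : ℝ, AEStronglyMeasurable (fun x => f (t,x)) volume := fun t =>
    (hf.continuous.comp (Continuous.prodMk_right t)).aestronglyMeasurable
  have hDtcont : Continuous (Dt f) := (contDiff_Dt hf).continuous
  have hint : ∀ t ∈ Icc 0 T, Integrable (fun x => f (t,x)) := by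
    intro t ht
    exact (hbi.mono' (hmeas t) (Filter.Eventually.of_forall fun x => by
      simpa [Real.norm_eq_abs] using hfb t ht x))
  -- continuity of the integral
  have hFcont : ContinuousOn (fun t => ∫ x, f (t,x)) (Icc 0 T) := by
    apply continuousOn_of_dominated (bound := bound) (fun t _ => hmeas t)
    · intro t ht
      exact Filter.Eventually.of_forall fun x => by
        simpa [Real.norm_eq_abs] using hfb t ht x
    · exact hbi
    · exact Filter.Eventually.of_forall fun x =>
        (hf.continuous.comp (Continuous.prodMk_left x)).continuousOn
  -- derivative of the integral at interior points
  have hFderiv : ∀ t ∈ Ioo 0 T, HasDerivAt (fun t => ∫ x, f (t,x)) 0 t := by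
    intro t₀ ht₀
    have hε : (0:ℝ) < min t₀ (T - t₀) := lt_min ht₀.1 (by linarith [ht₀.2])
    have hball : ball t₀ (min t₀ (T - t₀)) ⊆ Icc 0 T := by
      intro s hs
      rw [mem_ball, Real.dist_eq] at hs
      have h1 := abs_lt.1 hs
      constructor
      · have := min_le_left t₀ (T - t₀); linarith [h1.1]
      · have := min_le_right t₀ (T - t₀); linarith [h1.2]
    have key := hasDerivAt_integral_of_dominated_loc_of_deriv_le
      (F := fun t x => f (t,x)) (F' := fun t x => Dt f (t,x))
      (μ := (volume : Measure (X d))) (bound := bound) (x₀ := t₀) (ball_mem_nhds t₀ hε)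
      (Filter.Eventually.of_forall fun t => hmeas t)
      (hint t₀ (hball (mem_ball_self hε)))
      ((hDtcont.comp (Continuous.prodMk_right t₀)).aestronglyMeasurable)
      (Filter.Eventually.of_forall fun x => fun t ht =>
        by simpa [Real.norm_eq_abs] using hftb t (hball ht) x)
      hbi
      (Filter.Eventually.of_forall fun x => fun t _ =>
        hasDerivAt_tslice (hf.differentiable (by simp) _))
    -- the derivative is the integral of Dt f, which vanishes
    have hzero : (∫ x, Dt f (t₀, x)) = 0 := by
      have ht₀' : t₀ ∈ Icc 0 T := Ioo_subset_Icc_self ht₀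
      have hgd_int : ∀ k, Integrable (fun x => Dx k (g k) (t₀, x)) := by
        intro k
        apply hbi.mono' ((((contDiff_Dx (hg k) k)).continuous.comp
          (Continuous.prodMk_right t₀)).aestronglyMeasurable)
        exact Filter.Eventually.of_forall fun x => by
          simpa [Real.norm_eq_abs] using hgdb k t₀ ht₀' x
      calc (∫ x, Dt f (t₀, x)) = ∫ x, ∑ k, Dx k (g k) (t₀, x) := by
            apply integral_congr_ae; apply Filter.Eventually.of_forall
            intro x; exact hdiv (t₀, x) ht₀'
      _ = ∑ k, ∫ x, Dx k (g k) (t₀, x) :=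
            integral_finset_sum _ (fun k _ => hgd_int k)
      _ = 0 := by
            apply Finset.sum_eq_zero
            intro k _
            have hrw : (fun x => Dx k (g k) (t₀, x))
                = fun x => fderiv ℝ (fun y => g k (t₀, y)) x (Pi.single k 1) := by
              funext x
              exact dx_slice ((hg k).differentiable (by simp) _) k
            rw [hrw]
            apply integral_fderiv_eq_zero
            · exact ((hg k).comp ((contDiff_const).prodMk contDiff_id)).differentiable (by simp)
            · apply hbi.mono' (((hg k).continuous.comp
                (Continuous.prodMk_right t₀)).aestronglyMeasurable)
              exact Filter.Eventually.of_forall fun x => by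
                simpa [Real.norm_eq_abs] using hgb k t₀ ht₀' x
            · rw [← hrw]; exact hgd_int k
    rw [← hzero]
    exact key.2
  exact const_on_Icc hT hFcont hFderiv


end SMaux

namespace SMaux
open MeasureTheory Filter Topology Set Metric
variable {d : ℕ}
variable {E : Type*} [NormedAddCommGroup E] [NormedSpace ℝ E]

lemma contDiff_slice {f : ℝ × X d → E} (hf : ContDiff ℝ (⊤ : ℕ∞) f) (t : ℝ) :
    ContDiff ℝ (⊤ : ℕ∞) (fun y => f (t, y)) :=
  hf.comp (contDiff_const.prodMk contDiff_id)

lemma sliceD2 {f : ℝ × X d → E} (hf : ContDiff ℝ (⊤ : ℕ∞) f) (t : ℝ) (x : X d) (j k : Fin d) :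
    Dx j (Dx k f) (t, x)
      = fderiv ℝ (fderiv ℝ (fun y => f (t, y))) x (Pi.single j 1) (Pi.single k 1) := by
  have hslice := contDiff_slice hf t
  rw [dx_slice ((contDiff_Dx hf k).differentiable (by simp) _) j]
  have h1 : (fun y => Dx k f (t, y))
      = fun y => (ContinuousLinearMap.apply ℝ E (Pi.single k 1 : X d))
          (fderiv ℝ (fun y' => f (t, y')) y) :=
    funext fun y => dx_slice (hf.differentiable (by simp) _) k
  rw [h1, fderiv_clm_comp_apply _ ((hslice.fderiv_right (m := (⊤ : ℕ∞)) (by simp)).differentiable (by simp) x)]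
  rfl

lemma sliceD3 {f : ℝ × X d → E} (hf : ContDiff ℝ (⊤ : ℕ∞) f) (t : ℝ) (x : X d) (i j k : Fin d) :
    Dx i (Dx j (Dx k f)) (t, x)
      = fderiv ℝ (fderiv ℝ (fderiv ℝ (fun y => f (t, y)))) x
          (Pi.single i 1) (Pi.single j 1) (Pi.single k 1) := by
  letI : NormedAddCommGroup (X d →L[ℝ] X d →L[ℝ] E) := inferInstance
  letI : NormedSpace ℝ (X d →L[ℝ] X d →L[ℝ] E) := inferInstance
  have hslice := contDiff_slice hf t
  rw [dx_slice ((contDiff_Dx (contDiff_Dx hf k) j).differentiable (by simp) _) i]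
  have h1 : (fun y => Dx j (Dx k f) (t, y))
      = fun y => (ContinuousLinearMap.apply ℝ E (Pi.single k 1 : X d))
          ((ContinuousLinearMap.apply ℝ (X d →L[ℝ] E) (Pi.single j 1 : X d))
            (fderiv ℝ (fderiv ℝ (fun y' => f (t, y'))) y)) :=
    funext fun y => sliceD2 hf t y j k
  have hdiff2 : DifferentiableAt ℝ (fderiv ℝ (fderiv ℝ (fun y' => f (t, y')))) x :=
    ((hslice.fderiv_right (m := (⊤ : ℕ∞)) (by simp)).fderiv_right (m := (⊤ : ℕ∞)) (by simp)).differentiable (by simp) x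
  rw [h1]
  rw [show (fun y => (ContinuousLinearMap.apply ℝ E (Pi.single k 1 : X d))
          ((ContinuousLinearMap.apply ℝ (X d →L[ℝ] E) (Pi.single j 1 : X d))
            (fderiv ℝ (fderiv ℝ (fun y' => f (t, y'))) y)))
      = fun y => ((ContinuousLinearMap.apply ℝ E (Pi.single k 1 : X d)).comp
          (ContinuousLinearMap.apply ℝ (X d →L[ℝ] E) (Pi.single j 1 : X d)))
            (fderiv ℝ (fderiv ℝ (fun y' => f (t, y'))) y) from rfl]
  exact fderiv_clm_comp_apply _ hdiff2 _

lemma norm_single_le (k : Fin d) : ‖(Pi.single k 1 : X d)‖ ≤ 1 := by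
  apply pi_norm_le_iff_of_nonneg zero_le_one |>.2
  intro i
  rcases eq_or_ne i k with h | h
  · subst h; simp
  · simp [Pi.single_apply, h]

/-- the decay weight -/
def rho (d : ℕ) : X d → ℝ := fun x => ((1 + ‖x‖) ^ (d + 1))⁻¹

lemma rho_pos (x : X d) : 0 < rho d x := by
  apply inv_pos.2; positivity

lemma rho_le_one (x : X d) : rho d x ≤ 1 := by
  rw [rho, inv_le_one_iff₀]
  right
  apply one_le_pow₀
  linarith [norm_nonneg x]

lemma rho_integrable : Integrable (rho d) := by
  have h : (rho d) = fun x : X d => (1 + ‖x‖) ^ (-(d + 1 : ℝ)) := by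
    funext x
    rw [rho, Real.rpow_neg (by positivity), ← Real.rpow_natCast (1 + ‖x‖) (d+1)]
    norm_num
  rw [h]
  apply integrable_one_add_norm
  simp [Module.finrank_fintype_fun_eq_card]

lemma one_add_pow_le (a : ℝ) (ha : 0 ≤ a) (n : ℕ) : (1 + a) ^ n ≤ 2 ^ n * (1 + a ^ n) := by
  rcases le_total a 1 with h | h
  · calc (1 + a) ^ n ≤ 2 ^ n := by
          apply pow_le_pow_left₀ (by linarith) (by linarith)
      _ ≤ 2 ^ n * (1 + a ^ n) := by
          nlinarith [pow_nonneg ha n, pow_pos (show (0:ℝ) < 2 by norm_num) n]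
  · calc (1 + a) ^ n ≤ (2 * a) ^ n := by
          apply pow_le_pow_left₀ (by linarith) (by linarith)
      _ = 2 ^ n * a ^ n := mul_pow 2 a n
      _ ≤ 2 ^ n * (1 + a ^ n) := by
          have : (0:ℝ) < 2 ^ n := pow_pos (by norm_num) n
          nlinarith

end SMaux

namespace SMaux
open MeasureTheory Filter Topology Set Metric
variable {d : ℕ} {T : ℝ} {u : ℝ × X d → V3}

/-- master decay estimate: each spatial derivative decays like `rho`. -/
lemma decay_master
    (hdecay : ∀ n m : ℕ, ∃ C : ℝ, ∀ t ∈ Set.Icc 0 T, ∀ x : Fin d → ℝ,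
      ‖x‖ ^ n * ‖iteratedFDeriv ℝ m (fun y => u (t, y) - ![1, 0, 0]) x‖ ≤ C)
    (m : ℕ) : ∃ C : ℝ, 0 ≤ C ∧ ∀ t ∈ Set.Icc 0 T, ∀ x,
      ‖iteratedFDeriv ℝ m (fun y => u (t, y) - ![1, 0, 0]) x‖ ≤ C * rho d x := by
  obtain ⟨C₀, hC₀⟩ := hdecay 0 m
  obtain ⟨C₁, hC₁⟩ := hdecay (d + 1) m
  refine ⟨2 ^ (d+1) * (max C₀ 0 + max C₁ 0), by positivity, ?_⟩
  intro t ht x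
  set A := ‖iteratedFDeriv ℝ m (fun y => u (t, y) - ![1, 0, 0]) x‖ with hA
  have hA0 : 0 ≤ A := norm_nonneg _
  have h1 : A ≤ max C₀ 0 := by
    have := hC₀ t ht x; rw [pow_zero, one_mul] at this
    exact this.trans (le_max_left _ _)
  have h2 : ‖x‖ ^ (d+1) * A ≤ max C₁ 0 := (hC₁ t ht x).trans (le_max_left _ _)
  have hpos : (0:ℝ) < (1 + ‖x‖) ^ (d + 1) := by positivity
  rw [rho, ← div_eq_mul_inv, le_div_iff₀ hpos]
  calc A * (1 + ‖x‖) ^ (d + 1) ≤ A * (2 ^ (d+1) * (1 + ‖x‖ ^ (d+1))) := by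
        apply mul_le_mul_of_nonneg_left (one_add_pow_le ‖x‖ (norm_nonneg x) (d+1)) hA0
    _ = 2 ^ (d+1) * (A + ‖x‖ ^ (d+1) * A) := by ring
    _ ≤ 2 ^ (d+1) * (max C₀ 0 + max C₁ 0) := by
        apply mul_le_mul_of_nonneg_left (add_le_add h1 h2) (by positivity)

section bounds
variable (hu : ContDiff ℝ (⊤ : ℕ∞) u)
include hu

lemma slice_fderiv_eq (t : ℝ) :
    fderiv ℝ (fun y => u (t, y)) = fderiv ℝ (fun y => u (t, y) - ![1, 0, 0]) := by
  funext x
  rw [fderiv_sub_const]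

/-- order-0 bound -/
lemma bound0 {C : ℝ} (hb : ∀ t ∈ Set.Icc 0 T, ∀ x,
      ‖iteratedFDeriv ℝ 0 (fun y => u (t, y) - ![1, 0, 0]) x‖ ≤ C * rho d x) : ∀ t ∈ Set.Icc 0 T, ∀ x, ‖u (t, x) - ![1, 0, 0]‖ ≤ C * rho d x := by
  intro t ht x
  have := hb t ht x
  rwa [norm_iteratedFDeriv_zero] at this

/-- order-1 bound -/
lemma bound1 {C : ℝ} (hb : ∀ t ∈ Set.Icc 0 T, ∀ x,
      ‖iteratedFDeriv ℝ 1 (fun y => u (t, y) - ![1, 0, 0]) x‖ ≤ C * rho d x)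
    (hC : 0 ≤ C) :
    ∀ t ∈ Set.Icc 0 T, ∀ x, ∀ k, ‖Dx k u (t, x)‖ ≤ C * rho d x := by
  intro t ht x k
  rw [dx_slice (hu.differentiable (by simp) _) k, slice_fderiv_eq hu t]
  calc ‖fderiv ℝ (fun y => u (t, y) - ![1,0,0]) x (Pi.single k 1)‖
      ≤ ‖iteratedFDeriv ℝ 1 (fun y => u (t, y) - ![1,0,0]) x‖ * ‖(Pi.single k 1 : X d)‖ :=
        norm_fd1 _ _ _
    _ ≤ (C * rho d x) * 1 := by
        exact mul_le_mul (hb t ht x) (norm_single_le k) (norm_nonneg _)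
          (mul_nonneg hC (rho_pos x).le)
    _ = C * rho d x := mul_one _

/-- order-2 bound -/
lemma bound2 {C : ℝ} (hb : ∀ t ∈ Set.Icc 0 T, ∀ x,
      ‖iteratedFDeriv ℝ 2 (fun y => u (t, y) - ![1, 0, 0]) x‖ ≤ C * rho d x)
    (hC : 0 ≤ C) :
    ∀ t ∈ Set.Icc 0 T, ∀ x, ∀ j k, ‖Dx j (Dx k u) (t, x)‖ ≤ C * rho d x := by
  intro t ht x j k
  rw [sliceD2 hu t x j k, slice_fderiv_eq hu t]
  set A := ‖iteratedFDeriv ℝ 2 (fun y => u (t, y) - ![1,0,0]) x‖ with hA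
  calc ‖fderiv ℝ (fderiv ℝ (fun y => u (t, y) - ![1,0,0])) x (Pi.single j 1) (Pi.single k 1)‖
      ≤ A * ‖(Pi.single j 1 : X d)‖ * ‖(Pi.single k 1 : X d)‖ := norm_fd2 _ _ _ _
    _ ≤ A * 1 * ‖(Pi.single k 1 : X d)‖ := by
        apply mul_le_mul_of_nonneg_right _ (norm_nonneg _)
        exact mul_le_mul_of_nonneg_left (norm_single_le j) (norm_nonneg _)
    _ ≤ A * 1 * 1 :=
        mul_le_mul_of_nonneg_left (norm_single_le k)
          (mul_nonneg (norm_nonneg _) zero_le_one)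
    _ = A := by ring
    _ ≤ C * rho d x := hb t ht x

set_option maxHeartbeats 800000 in
/-- order-3 bound -/
lemma bound3 {C : ℝ} (hb : ∀ t ∈ Set.Icc 0 T, ∀ x,
      ‖iteratedFDeriv ℝ 3 (fun y => u (t, y) - ![1, 0, 0]) x‖ ≤ C * rho d x)
    (hC : 0 ≤ C) :
    ∀ t ∈ Set.Icc 0 T, ∀ x, ∀ i j k, ‖Dx i (Dx j (Dx k u)) (t, x)‖ ≤ C * rho d x := by
  intro t ht x i j k
  rw [sliceD3 hu t x i j k, slice_fderiv_eq hu t]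
  set A := ‖iteratedFDeriv ℝ 3 (fun y => u (t, y) - ![1,0,0]) x‖ with hA
  calc ‖fderiv ℝ (fderiv ℝ (fderiv ℝ (fun y => u (t, y) - ![1,0,0]))) x
        (Pi.single i 1) (Pi.single j 1) (Pi.single k 1)‖
      ≤ A * ‖(Pi.single i 1 : X d)‖ * ‖(Pi.single j 1 : X d)‖ * ‖(Pi.single k 1 : X d)‖ :=
        by rw [hA]; exact norm_fd3 _ _ _ _ _
    _ ≤ A * 1 * ‖(Pi.single j 1 : X d)‖ * ‖(Pi.single k 1 : X d)‖ := by
        apply mul_le_mul_of_nonneg_right _ (norm_nonneg _)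
        apply mul_le_mul_of_nonneg_right _ (norm_nonneg _)
        exact mul_le_mul_of_nonneg_left (norm_single_le i) (norm_nonneg _)
    _ ≤ A * 1 * 1 * ‖(Pi.single k 1 : X d)‖ := by
        apply mul_le_mul_of_nonneg_right _ (norm_nonneg _)
        exact mul_le_mul_of_nonneg_left (norm_single_le j)
          (mul_nonneg (norm_nonneg _) zero_le_one)
    _ ≤ A * 1 * 1 * 1 :=
        mul_le_mul_of_nonneg_left (norm_single_le k)
          (mul_nonneg (mul_nonneg (norm_nonneg _) zero_le_one) zero_le_one)
    _ = A := by ring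
    _ ≤ C * rho d x := hb t ht x

end bounds
end SMaux

namespace SMaux
open MeasureTheory Filter Topology Set Metric
variable {d : ℕ} {T : ℝ} {u : ℝ × X d → V3}

lemma cross3_self (v : V3) : cross3 v v = 0 := by unfold cross3; exact cross_self v

lemma mdot_symm (a b : V3) : mdot a b = mdot b a := by unfold mdot; ring

lemma mdot_eta_cross (a b : V3) : mdot (etaV (cross3 a b)) b = 0 := by
  simp [mdot, etaV, cross3, crossProduct]; ring

/-- the spatial Laplacian-type combination -/
def bigL (u : ℝ × X d → V3) : ℝ × X d → V3 := fun q => ∑ j, Dx j (Dx j u) q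

section slab
variable (hu : ContDiff ℝ (⊤ : ℕ∞) u)
include hu

lemma contDiff_bigL : ContDiff ℝ (⊤ : ℕ∞) (bigL u) := by
  unfold bigL
  exact ContDiff.sum fun j _ => contDiff_Dx (contDiff_Dx hu j) j

/-- product rule for the cross-product flux term -/
lemma dx_flux (k : Fin d) (p : ℝ × X d) :
    Dx k (fun q => cross3 (u q) (Dx k u q)) p = cross3 (u p) (Dx k (Dx k u) p) := by
  have h : Dx k (fun q => crossL (u q) (Dx k u q)) p
      = crossL (Dx k u p) (Dx k u p) + crossL (u p) (Dx k (Dx k u) p) := by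
    unfold Dx
    exact fderiv_bilin_apply crossL (hu.differentiable (by simp) p)
      ((contDiff_Dx hu k).differentiable (by simp) p) _
  have h2 : (fun q => cross3 (u q) (Dx k u q)) = fun q => crossL (u q) (Dx k u q) := rfl
  rw [h2]
  rw [h]
  simp [cross3_self]

/-- the Schrödinger map equation in Laplacian form -/
lemma dtU (hSM : ∀ p : ℝ × (Fin d → ℝ), p.1 ∈ Set.Icc 0 T →
      Dt u p = etaV (∑ k : Fin d, Dx k (fun p' => cross3 (u p') (Dx k u p')) p))
    (p : ℝ × X d) (hp : p.1 ∈ Set.Icc 0 T) :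
    Dt u p = etaV (cross3 (u p) (bigL u p)) := by
  rw [hSM p hp]
  have h1 : ∀ k : Fin d, Dx k (fun p' => cross3 (u p') (Dx k u p')) p
      = cross3 (u p) (Dx k (Dx k u) p) := fun k => dx_flux hu k p
  have harg : (∑ k : Fin d, Dx k (fun p' => cross3 (u p') (Dx k u p')) p)
      = cross3 (u p) (bigL u p) :=
    calc ∑ k : Fin d, Dx k (fun p' => cross3 (u p') (Dx k u p')) p
        = ∑ k : Fin d, crossL (u p) (Dx k (Dx k u) p) := by
          apply Finset.sum_congr rfl; intro k _; rw [h1 k]; rfl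
      _ = crossL (u p) (∑ k : Fin d, Dx k (Dx k u) p) := (map_sum (crossL (u p)) _ _).symm
      _ = cross3 (u p) (bigL u p) := rfl
  rw [harg]

/-- spatial derivative of `Dt u` on the slab. -/
lemma dxDtU (hSM : ∀ p : ℝ × (Fin d → ℝ), p.1 ∈ Set.Icc 0 T →
      Dt u p = etaV (∑ k : Fin d, Dx k (fun p' => cross3 (u p') (Dx k u p')) p))
    (k : Fin d) (t : ℝ) (ht : t ∈ Set.Icc 0 T) (x : X d) :
    Dx k (Dt u) (t, x)
      = etaV (cross3 (Dx k u (t, x)) (bigL u (t, x))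
          + cross3 (u (t, x)) (∑ j, Dx k (Dx j (Dx j u)) (t, x))) := by
  have hR : ContDiff ℝ (⊤ : ℕ∞) (fun q => etaL (crossL (u q) (bigL u q))) := by
    apply (etaL.contDiff).comp
    exact (crossL.isBoundedBilinearMap.contDiff).comp (hu.prodMk (contDiff_bigL hu))
  have hcong : Dx k (Dt u) (t, x) = Dx k (fun q => etaL (crossL (u q) (bigL u q))) (t, x) := by
    apply dx_congr_slice ((contDiff_Dt hu).differentiable (by simp) _)
      (hR.differentiable (by simp) _)
    intro y
    exact dtU hu hSM (t, y) ht
  rw [hcong]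
  have h1 : Dx k (fun q => etaL (crossL (u q) (bigL u q))) (t, x)
      = etaL (Dx k (fun q => crossL (u q) (bigL u q)) (t, x)) := by
    unfold Dx
    exact fderiv_clm_comp_apply etaL
      (((crossL.isBoundedBilinearMap.contDiff).comp
        (hu.prodMk (contDiff_bigL hu))).differentiable (by simp) _) _
  rw [h1]
  have h2 : Dx k (fun q => crossL (u q) (bigL u q)) (t, x)
      = crossL (Dx k u (t, x)) (bigL u (t, x)) + crossL (u (t, x)) (Dx k (bigL u) (t, x)) := by
    unfold Dx
    exact fderiv_bilin_apply crossL (hu.differentiable (by simp) _)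
      ((contDiff_bigL hu).differentiable (by simp) _) _
  rw [h2]
  have h3 : Dx k (bigL u) (t, x) = ∑ j, Dx k (Dx j (Dx j u)) (t, x) := by
    have hsum := fderiv_fun_sum (𝕜 := ℝ) (x := ((t,x) : ℝ × X d)) (u := Finset.univ)
      (A := fun j : Fin d => Dx j (Dx j u))
      (fun j _ => (contDiff_Dx (contDiff_Dx hu j) j).differentiable (by simp) _)
    show (fderiv ℝ (fun q => ∑ j, Dx j (Dx j u) q) (t,x)) (0, Pi.single k 1)
      = ∑ j, Dx k (Dx j (Dx j u)) (t, x)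
    rw [hsum, ContinuousLinearMap.sum_apply]
    rfl
  rw [h3]
  rfl

end slab
end SMaux

namespace SMaux
open MeasureTheory Filter Topology Set Metric
variable {d : ℕ} {T : ℝ} {u : ℝ × X d → V3}

lemma fderiv_coord {f : ℝ × X d → V3} {p : ℝ × X d} (hf : DifferentiableAt ℝ f p)
    (v : ℝ × X d) (i : Fin 3) :
    fderiv ℝ (fun q => f q i) p v = fderiv ℝ f p v i :=
  fderiv_clm_comp_apply (ContinuousLinearMap.proj (R := ℝ) (φ := fun _ : Fin 3 => ℝ) i) hf v

section slab2
variable (hu : ContDiff ℝ (⊤ : ℕ∞) u)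
  (hSM : ∀ p : ℝ × (Fin d → ℝ), p.1 ∈ Set.Icc 0 T →
      Dt u p = etaV (∑ k : Fin d, Dx k (fun p' => cross3 (u p') (Dx k u p')) p))
include hu hSM

/-- first divergence identity -/
lemma div1 (p : ℝ × X d) (hp : p.1 ∈ Set.Icc 0 T) :
    Dt (fun q => u q 0 - 1) p
      = ∑ k : Fin d, Dx k (fun q => -(cross3 (u q) (Dx k u q) 0)) p := by
  have hGk : ∀ k : Fin d, ContDiff ℝ (⊤ : ℕ∞) (fun q => cross3 (u q) (Dx k u q)) := fun k =>
    (crossL.isBoundedBilinearMap.contDiff).comp (hu.prodMk (contDiff_Dx hu k))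
  have ha : Dt (fun q => u q 0 - 1) p = Dt u p 0 := by
    unfold Dt
    rw [fderiv_sub_const]
    exact fderiv_coord (hu.differentiable (by simp) p) _ 0
  rw [ha, hSM p hp]
  have h0 : etaV (∑ k : Fin d, Dx k (fun p' => cross3 (u p') (Dx k u p')) p) 0
      = -((∑ k : Fin d, Dx k (fun p' => cross3 (u p') (Dx k u p')) p) 0) := by
    simp [etaV]
  rw [h0, Finset.sum_apply, ← Finset.sum_neg_distrib]
  apply Finset.sum_congr rfl
  intro k _
  have h1 : Dx k (fun q => -(cross3 (u q) (Dx k u q) 0)) p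
      = -(Dx k (fun q => cross3 (u q) (Dx k u q) 0) p) := by
    unfold Dx
    rw [fderiv_fun_neg]
    rfl
  have h2 : Dx k (fun q => cross3 (u q) (Dx k u q) 0) p
      = Dx k (fun q => cross3 (u q) (Dx k u q)) p 0 := by
    unfold Dx
    exact fderiv_coord ((hGk k).differentiable (by simp) p) _ 0
  rw [h1, h2]

/-- second divergence identity -/
lemma div2 (p : ℝ × X d) (hp : p.1 ∈ Set.Icc 0 T) :
    Dt (fun q => ∑ k : Fin d, mdot (Dx k u q) (Dx k u q)) p
      = ∑ k : Fin d, Dx k (fun q => 2 * mdot (Dt u q) (Dx k u q)) p := by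
  have hDxu : ∀ k : Fin d, ContDiff ℝ (⊤ : ℕ∞) (Dx k u) := fun k => contDiff_Dx hu k
  have hmm : ∀ k : Fin d, ContDiff ℝ (⊤ : ℕ∞) (fun q => mdotL (Dx k u q) (Dx k u q)) := fun k =>
    (mdotL.isBoundedBilinearMap.contDiff).comp ((hDxu k).prodMk (hDxu k))
  -- left-hand side
  have hL : Dt (fun q => ∑ k : Fin d, mdot (Dx k u q) (Dx k u q)) p
      = ∑ k : Fin d, (mdot (Dt (Dx k u) p) (Dx k u p) + mdot (Dx k u p) (Dt (Dx k u) p)) := by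
    show (fderiv ℝ (fun q => ∑ k : Fin d, (fun k' : Fin d =>
        fun q' => mdotL (Dx k' u q') (Dx k' u q')) k q) p) (1, 0) = _
    rw [fderiv_fun_sum (fun k _ => (hmm k).differentiable (by simp) p), ContinuousLinearMap.sum_apply]
    apply Finset.sum_congr rfl
    intro k _
    exact fderiv_bilin_apply mdotL ((hDxu k).differentiable (by simp) p)
      ((hDxu k).differentiable (by simp) p) (1, 0)
  -- right-hand side, term by term
  have hR : ∀ k : Fin d, Dx k (fun q => 2 * mdot (Dt u q) (Dx k u q)) p
      = 2 * (mdot (Dx k (Dt u) p) (Dx k u p) + mdot (Dt u p) (Dx k (Dx k u) p)) := by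
    intro k
    have hdm : DifferentiableAt ℝ (fun q => mdotL (Dt u q) (Dx k u q)) p :=
      ((mdotL.isBoundedBilinearMap.contDiff).comp
        ((contDiff_Dt hu).prodMk (hDxu k))).differentiable (by simp) p
    show (fderiv ℝ (fun q => 2 * (fun q' => mdotL (Dt u q') (Dx k u q')) q) p) (0, Pi.single k 1) = _
    rw [fderiv_const_mul hdm]
    rw [ContinuousLinearMap.smul_apply]
    rw [fderiv_bilin_apply mdotL ((contDiff_Dt hu).differentiable (by simp) p)
      ((hDxu k).differentiable (by simp) p) (0, Pi.single k 1)]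
    simp only [smul_eq_mul, mdotL_apply]
    rfl
  rw [hL]
  have hRs : (∑ k : Fin d, Dx k (fun q => 2 * mdot (Dt u q) (Dx k u q)) p)
      = ∑ k : Fin d, 2 * (mdot (Dx k (Dt u) p) (Dx k u p) + mdot (Dt u p) (Dx k (Dx k u) p)) :=
    Finset.sum_congr rfl (fun k _ => hR k)
  rw [hRs]
  -- use Clairaut and the key cancellation
  have hcl : ∀ k : Fin d, Dt (Dx k u) p = Dx k (Dt u) p := fun k => dt_dx_comm hu k p
  have hzero : (∑ k : Fin d, mdot (Dt u p) (Dx k (Dx k u) p)) = 0 := by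
    have hsum : (∑ k : Fin d, mdot (Dt u p) (Dx k (Dx k u) p))
        = mdot (Dt u p) (bigL u p) := by
      show (∑ k : Fin d, (mdotL (Dt u p)) (Dx k (Dx k u) p)) = mdotL (Dt u p) (bigL u p)
      rw [← map_sum (mdotL (Dt u p))]
      rfl
    rw [hsum, dtU hu hSM p hp]
    exact mdot_eta_cross (u p) (bigL u p)
  calc ∑ k : Fin d, (mdot (Dt (Dx k u) p) (Dx k u p) + mdot (Dx k u p) (Dt (Dx k u) p))
      = ∑ k : Fin d, 2 * mdot (Dx k (Dt u) p) (Dx k u p) := by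
        apply Finset.sum_congr rfl
        intro k _
        rw [hcl k, mdot_symm (Dx k u p)]
        ring
    _ = (∑ k : Fin d, 2 * (mdot (Dx k (Dt u) p) (Dx k u p) + mdot (Dt u p) (Dx k (Dx k u) p)))
          - 2 * (∑ k : Fin d, mdot (Dt u p) (Dx k (Dx k u) p)) := by
        rw [Finset.mul_sum, ← Finset.sum_sub_distrib]
        apply Finset.sum_congr rfl
        intro k _
        ring
    _ = ∑ k : Fin d, 2 * (mdot (Dx k (Dt u) p) (Dx k u p) + mdot (Dt u p) (Dx k (Dx k u) p)) := by
        rw [hzero]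
        ring

end slab2
end SMaux

namespace SMaux
open MeasureTheory Filter Topology Set Metric
variable {d : ℕ} {u : ℝ × X d → V3}

section calc2
variable (hu : ContDiff ℝ (⊤ : ℕ∞) u)
include hu

lemma dt_f1 (p : ℝ × X d) : Dt (fun q => u q 0 - 1) p = Dt u p 0 := by
  unfold Dt
  rw [fderiv_sub_const]
  exact fderiv_coord (hu.differentiable (by simp) p) _ 0

lemma dx_g1 (k : Fin d) (p : ℝ × X d) :
    Dx k (fun q => -(cross3 (u q) (Dx k u q) 0)) p
      = -(cross3 (u p) (Dx k (Dx k u) p) 0) := by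
  have hGk : ContDiff ℝ (⊤ : ℕ∞) (fun q => cross3 (u q) (Dx k u q)) :=
    (crossL.isBoundedBilinearMap.contDiff).comp (hu.prodMk (contDiff_Dx hu k))
  have h1 : Dx k (fun q => -(cross3 (u q) (Dx k u q) 0)) p
      = -(Dx k (fun q => cross3 (u q) (Dx k u q) 0) p) := by
    unfold Dx
    rw [fderiv_fun_neg]
    rfl
  have h2 : Dx k (fun q => cross3 (u q) (Dx k u q) 0) p
      = Dx k (fun q => cross3 (u q) (Dx k u q)) p 0 := by
    unfold Dx
    exact fderiv_coord (hGk.differentiable (by simp) p) _ 0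
  rw [h1, h2, dx_flux hu k p]

lemma dt_f2 (p : ℝ × X d) :
    Dt (fun q => ∑ k : Fin d, mdot (Dx k u q) (Dx k u q)) p
      = ∑ k : Fin d, (mdot (Dt (Dx k u) p) (Dx k u p) + mdot (Dx k u p) (Dt (Dx k u) p)) := by
  have hDxu : ∀ k : Fin d, ContDiff ℝ (⊤ : ℕ∞) (Dx k u) := fun k => contDiff_Dx hu k
  have hmm : ∀ k : Fin d, ContDiff ℝ (⊤ : ℕ∞) (fun q => mdotL (Dx k u q) (Dx k u q)) := fun k =>
    (mdotL.isBoundedBilinearMap.contDiff).comp ((hDxu k).prodMk (hDxu k))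
  show (fderiv ℝ (fun q => ∑ k : Fin d, (fun k' : Fin d =>
      fun q' => mdotL (Dx k' u q') (Dx k' u q')) k q) p) (1, 0) = _
  rw [fderiv_fun_sum (fun k _ => (hmm k).differentiable (by simp) p), ContinuousLinearMap.sum_apply]
  apply Finset.sum_congr rfl
  intro k _
  exact fderiv_bilin_apply mdotL ((hDxu k).differentiable (by simp) p)
    ((hDxu k).differentiable (by simp) p) (1, 0)

lemma dx_g2 (k : Fin d) (p : ℝ × X d) :
    Dx k (fun q => 2 * mdot (Dt u q) (Dx k u q)) p
      = 2 * (mdot (Dx k (Dt u) p) (Dx k u p) + mdot (Dt u p) (Dx k (Dx k u) p)) := by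
  have hdm : DifferentiableAt ℝ (fun q => mdotL (Dt u q) (Dx k u q)) p :=
    ((mdotL.isBoundedBilinearMap.contDiff).comp
      ((contDiff_Dt hu).prodMk (contDiff_Dx hu k))).differentiable (by simp) p
  show (fderiv ℝ (fun q => 2 * (fun q' => mdotL (Dt u q') (Dx k u q')) q) p) (0, Pi.single k 1) = _
  rw [fderiv_const_mul hdm]
  rw [ContinuousLinearMap.smul_apply]
  rw [fderiv_bilin_apply mdotL ((contDiff_Dt hu).differentiable (by simp) p)
    ((contDiff_Dx hu k).differentiable (by simp) p) (0, Pi.single k 1)]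
  simp only [smul_eq_mul, mdotL_apply]
  rfl

end calc2

lemma norm_etaV (v : V3) : ‖etaV v‖ ≤ ‖v‖ := by
  simpa using norm_etaV_le v
end SMaux

namespace SMaux
open MeasureTheory Filter Topology Set Metric
variable {d : ℕ} {T : ℝ} {u : ℝ × X d → V3}

section slabbounds
variable (hu : ContDiff ℝ (⊤ : ℕ∞) u)
  (hSM : ∀ p : ℝ × (Fin d → ℝ), p.1 ∈ Set.Icc 0 T →
      Dt u p = etaV (∑ k : Fin d, Dx k (fun p' => cross3 (u p') (Dx k u p')) p))
  {Cu C1 C2 C3 : ℝ}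
  (hCu : 0 ≤ Cu) (hC1 : 0 ≤ C1) (hC2 : 0 ≤ C2) (hC3 : 0 ≤ C3)
  (hbu : ∀ t ∈ Set.Icc 0 T, ∀ x, ‖u (t, x)‖ ≤ Cu)
  (hb1 : ∀ t ∈ Set.Icc 0 T, ∀ x, ∀ k, ‖Dx k u (t, x)‖ ≤ C1 * rho d x)
  (hb2 : ∀ t ∈ Set.Icc 0 T, ∀ x, ∀ j k, ‖Dx j (Dx k u) (t, x)‖ ≤ C2 * rho d x)
include hu hSM hCu hC1 hC2 hbu hb1 hb2

lemma bigL_bound : ∀ t ∈ Set.Icc 0 T, ∀ x, ‖bigL u (t, x)‖ ≤ (d * C2) * rho d x := by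
  intro t ht x
  calc ‖bigL u (t, x)‖ ≤ ∑ j : Fin d, ‖Dx j (Dx j u) (t, x)‖ := norm_sum_le _ _
    _ ≤ ∑ _j : Fin d, C2 * rho d x := Finset.sum_le_sum (fun j _ => hb2 t ht x j j)
    _ = (d * C2) * rho d x := by
        rw [Finset.sum_const, Finset.card_univ, Fintype.card_fin, nsmul_eq_mul]
        ring

lemma dtU_bound : ∀ t ∈ Set.Icc 0 T, ∀ x, ‖Dt u (t, x)‖ ≤ (2 * Cu * (d * C2)) * rho d x := by
  intro t ht x
  rw [dtU hu hSM (t, x) ht]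
  have h1 := norm_etaV (cross3 (u (t, x)) (bigL u (t, x)))
  have h2 := norm_cross_le (u (t, x)) (bigL u (t, x))
  have h3 := bigL_bound hu hSM hCu hC1 hC2 hbu hb1 hb2 t ht x
  have hρ : 0 ≤ rho d x := (rho_pos x).le
  calc ‖etaV (cross3 (u (t, x)) (bigL u (t, x)))‖
      ≤ 2 * ‖u (t, x)‖ * ‖bigL u (t, x)‖ := h1.trans h2
    _ ≤ 2 * Cu * ((d * C2) * rho d x) := by
        have := hbu t ht x
        have h4 : (0:ℝ) ≤ ‖bigL u (t,x)‖ := norm_nonneg _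
        nlinarith [norm_nonneg (u (t,x))]
    _ = (2 * Cu * (d * C2)) * rho d x := by ring

include hC3 in
lemma dxDtU_bound
    (hb3 : ∀ t ∈ Set.Icc 0 T, ∀ x, ∀ i j k, ‖Dx i (Dx j (Dx k u)) (t, x)‖ ≤ C3 * rho d x) :
    ∀ t ∈ Set.Icc 0 T, ∀ x, ∀ k, ‖Dx k (Dt u) (t, x)‖
      ≤ (2 * C1 * (d * C2) + 2 * Cu * (d * C3)) * rho d x := by
  intro t ht x k
  rw [dxDtU hu hSM k t ht x]
  have hρ : 0 ≤ rho d x := (rho_pos x).le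
  have hρ1 : rho d x ≤ 1 := rho_le_one x
  have hsum3 : ‖∑ j : Fin d, Dx k (Dx j (Dx j u)) (t, x)‖ ≤ (d * C3) * rho d x := by
    calc ‖∑ j : Fin d, Dx k (Dx j (Dx j u)) (t, x)‖
        ≤ ∑ j : Fin d, ‖Dx k (Dx j (Dx j u)) (t, x)‖ := norm_sum_le _ _
      _ ≤ ∑ _j : Fin d, C3 * rho d x := Finset.sum_le_sum (fun j _ => hb3 t ht x k j j)
      _ = (d * C3) * rho d x := by
          rw [Finset.sum_const, Finset.card_univ, Fintype.card_fin, nsmul_eq_mul]; ring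
  have hL := bigL_bound hu hSM hCu hC1 hC2 hbu hb1 hb2 t ht x
  have hLC : ‖bigL u (t, x)‖ ≤ d * C2 := by
    calc ‖bigL u (t, x)‖ ≤ (d * C2) * rho d x := hL
      _ ≤ (d * C2) * 1 := by
          apply mul_le_mul_of_nonneg_left hρ1 (by positivity)
      _ = d * C2 := mul_one _
  calc ‖etaV (cross3 (Dx k u (t, x)) (bigL u (t, x))
        + cross3 (u (t, x)) (∑ j, Dx k (Dx j (Dx j u)) (t, x)))‖
      ≤ ‖cross3 (Dx k u (t, x)) (bigL u (t, x))
        + cross3 (u (t, x)) (∑ j, Dx k (Dx j (Dx j u)) (t, x))‖ := norm_etaV _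
    _ ≤ ‖cross3 (Dx k u (t, x)) (bigL u (t, x))‖
        + ‖cross3 (u (t, x)) (∑ j, Dx k (Dx j (Dx j u)) (t, x))‖ := norm_add_le _ _
    _ ≤ 2 * ‖Dx k u (t, x)‖ * ‖bigL u (t, x)‖
        + 2 * ‖u (t, x)‖ * ‖∑ j, Dx k (Dx j (Dx j u)) (t, x)‖ :=
        add_le_add (norm_cross_le _ _) (norm_cross_le _ _)
    _ ≤ 2 * (C1 * rho d x) * (d * C2) + 2 * Cu * ((d * C3) * rho d x) := by
        apply add_le_add
        · have ha := hb1 t ht x k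
          nlinarith [norm_nonneg (Dx k u (t,x)), norm_nonneg (bigL u (t,x))]
        · have hb := hbu t ht x
          nlinarith [norm_nonneg (u (t,x)),
            norm_nonneg (∑ j : Fin d, Dx k (Dx j (Dx j u)) (t, x))]
    _ = (2 * C1 * (d * C2) + 2 * Cu * (d * C3)) * rho d x := by ring

end slabbounds
end SMaux

namespace SMaux

lemma cross_decay {a b : V3} {A B r : ℝ} (ha : ‖a‖ ≤ A) (hb : ‖b‖ ≤ B * r)
    (hA : 0 ≤ A) (hB : 0 ≤ B) (hr : 0 ≤ r) : ‖cross3 a b‖ ≤ 2 * A * B * r := by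
  calc ‖cross3 a b‖ ≤ 2 * ‖a‖ * ‖b‖ := norm_cross_le a b
    _ ≤ 2 * A * (B * r) := by nlinarith [norm_nonneg a, norm_nonneg b]
    _ = 2 * A * B * r := by ring

lemma mdot_decay {a b : V3} {A B r : ℝ} (ha : ‖a‖ ≤ A) (hb : ‖b‖ ≤ B * r)
    (hA : 0 ≤ A) (hB : 0 ≤ B) (hr : 0 ≤ r) : |mdot a b| ≤ 3 * A * B * r := by
  calc |mdot a b| ≤ 3 * ‖a‖ * ‖b‖ := abs_mdot_le a b
    _ ≤ 3 * A * (B * r) := by nlinarith [norm_nonneg a, norm_nonneg b]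
    _ = 3 * A * B * r := by ring

end SMaux


open SMaux in
/-- for smooth, spatially rapidly decaying Schrödinger maps into `ℍ²`,
both `∫ (u₀ − 1) dx` and the energy `∫ ‖∇u‖² dx` are conserved. -/
theorem sm_hyperbolic_conserved_quantities
    {d : ℕ} (hd : 1 ≤ d) (T : ℝ) (hT : 0 < T)
    (u : ℝ × (Fin d → ℝ) → V3)
    (hu : ContDiff ℝ (⊤ : ℕ∞) u)
    (hH : ∀ p : ℝ × (Fin d → ℝ), p.1 ∈ Set.Icc 0 T →
      mdot (u p) (u p) = -1 ∧ 0 < u p 0)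
    (hSM : ∀ p : ℝ × (Fin d → ℝ), p.1 ∈ Set.Icc 0 T →
      Dt u p = etaV (∑ k : Fin d,
        Dx k (fun p' => cross3 (u p') (Dx k u p')) p))
    -- `u(t,·) − (1,0,0)` Schwartz in `x`, uniformly for `t` in `[0,T]`
    (hdecay : ∀ n m : ℕ, ∃ C : ℝ, ∀ t ∈ Set.Icc 0 T, ∀ x : Fin d → ℝ,
      ‖x‖ ^ n * ‖iteratedFDeriv ℝ m (fun y => u (t, y) - ![1, 0, 0]) x‖ ≤ C) :
    ∀ t ∈ Set.Icc 0 T,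
      (∫ x : Fin d → ℝ, (u (t, x) 0 - 1)) = (∫ x : Fin d → ℝ, (u (0, x) 0 - 1)) ∧
      (∫ x : Fin d → ℝ, ∑ k : Fin d, mdot (Dx k u (t, x)) (Dx k u (t, x)))
        = (∫ x : Fin d → ℝ, ∑ k : Fin d, mdot (Dx k u (0, x)) (Dx k u (0, x))) := by
  classical
  obtain ⟨C0, hC0n, hC0⟩ := decay_master hdecay 0
  obtain ⟨C1, hC1n, hC1⟩ := decay_master hdecay 1
  obtain ⟨C2, hC2n, hC2⟩ := decay_master hdecay 2
  obtain ⟨C3, hC3n, hC3⟩ := decay_master hdecay 3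
  have hb0 := bound0 hu hC0
  have hb1 := bound1 hu hC1 hC1n
  have hb2 := bound2 hu hC2 hC2n
  have hb3 := bound3 hu hC3 hC3n
  have hρ : ∀ x : Fin d → ℝ, 0 ≤ rho d x := fun x => (rho_pos x).le
  have hρ1 : ∀ x : Fin d → ℝ, rho d x ≤ 1 := fun x => rho_le_one x
  have habs : ∀ (v : V3) (i : Fin 3), |v i| ≤ ‖v‖ := fun v i => norm_le_pi_norm v i
  set Cu : ℝ := C0 + 1 with hCudef
  have hCun : 0 ≤ Cu := by simp only [hCudef]; linarith
  have hcnorm : ‖(![1,0,0] : V3)‖ ≤ 1 := by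
    apply pi_norm_le_iff_of_nonneg zero_le_one |>.2
    intro i; fin_cases i <;> simp
  have hbu : ∀ s ∈ Set.Icc 0 T, ∀ x, ‖u (s, x)‖ ≤ Cu := by
    intro s hs x
    calc ‖u (s, x)‖ = ‖(u (s, x) - ![1,0,0]) + ![1,0,0]‖ := by rw [sub_add_cancel]
      _ ≤ ‖u (s, x) - ![1,0,0]‖ + ‖(![1,0,0] : V3)‖ := norm_add_le _ _
      _ ≤ C0 * rho d x + 1 := add_le_add (hb0 s hs x) hcnorm
      _ ≤ C0 * 1 + 1 := by
          have := hρ1 x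
          nlinarith [hρ x]
      _ = Cu := by rw [hCudef]; ring
  have hdtb := dtU_bound hu hSM hCun hC1n hC2n hbu hb1 hb2
  have hdxdtb := dxDtU_bound hu hSM hCun hC1n hC2n hC3n hbu hb1 hb2 hb3
  set CDt : ℝ := 2 * Cu * (d * C2) with hCDtdef
  set CdD : ℝ := 2 * C1 * (d * C2) + 2 * Cu * (d * C3) with hCdDdef
  have hCDtn : 0 ≤ CDt := by rw [hCDtdef]; positivity
  have hCdDn : 0 ≤ CdD := by rw [hCdDdef]; positivity
  intro t ht
  constructor
  · -- conservation of ∫ (u₀ - 1)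
    set B : ℝ := C0 + CDt + 2 * Cu * C1 + 2 * Cu * C2 with hBdef
    have hC0B : C0 ≤ B := by rw [hBdef]; nlinarith
    have hCDtB : CDt ≤ B := by rw [hBdef]; nlinarith
    have hc1B : 2 * Cu * C1 ≤ B := by rw [hBdef]; nlinarith
    have hc2B : 2 * Cu * C2 ≤ B := by rw [hBdef]; nlinarith
    have key := conserved T hT (fun q => u q 0 - 1)
      ((contDiff_pi.mp hu 0).sub contDiff_const)
      (fun k => fun q => -(cross3 (u q) (Dx k u q) 0))
      (fun k => (contDiff_pi.mp ((crossL.isBoundedBilinearMap.contDiff).comp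
        (hu.prodMk (contDiff_Dx hu k))) 0).neg)
      (fun p hp => div1 hu hSM p hp)
      (fun x => B * rho d x)
      (rho_integrable.const_mul B)
      (by -- |f1| ≤ B ρ
        intro s hs x
        show |u (s, x) 0 - 1| ≤ B * rho d x
        have h : u (s, x) 0 - 1 = (u (s, x) - (![1,0,0] : V3)) 0 := by
          simp [Pi.sub_apply]
        rw [h]
        calc |(u (s, x) - (![1,0,0] : V3)) 0| ≤ ‖u (s, x) - (![1,0,0] : V3)‖ := habs _ 0
          _ ≤ C0 * rho d x := hb0 s hs x
          _ ≤ B * rho d x := mul_le_mul_of_nonneg_right hC0B (hρ x))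
      (by -- |Dt f1| ≤ B ρ
        intro s hs x
        rw [dt_f1 hu (s, x)]
        calc |Dt u (s, x) 0| ≤ ‖Dt u (s, x)‖ := habs _ 0
          _ ≤ CDt * rho d x := hdtb s hs x
          _ ≤ B * rho d x := mul_le_mul_of_nonneg_right hCDtB (hρ x))
      (by -- |g1 k| ≤ B ρ
        intro k s hs x
        show |-(cross3 (u (s, x)) (Dx k u (s, x)) 0)| ≤ B * rho d x
        rw [abs_neg]
        calc |cross3 (u (s, x)) (Dx k u (s, x)) 0|
            ≤ ‖cross3 (u (s, x)) (Dx k u (s, x))‖ := habs _ 0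
          _ ≤ 2 * Cu * C1 * rho d x :=
            cross_decay (hbu s hs x) (hb1 s hs x k) hCun hC1n (hρ x)
          _ ≤ B * rho d x := mul_le_mul_of_nonneg_right hc1B (hρ x))
      (by -- |Dx k g1 k| ≤ B ρ
        intro k s hs x
        rw [dx_g1 hu k (s, x), abs_neg]
        calc |cross3 (u (s, x)) (Dx k (Dx k u) (s, x)) 0|
            ≤ ‖cross3 (u (s, x)) (Dx k (Dx k u) (s, x))‖ := habs _ 0
          _ ≤ 2 * Cu * C2 * rho d x :=
            cross_decay (hbu s hs x) (hb2 s hs x k k) hCun hC2n (hρ x)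
          _ ≤ B * rho d x := mul_le_mul_of_nonneg_right hc2B (hρ x))
    exact key t ht
  · -- conservation of energy
    have hC1' : ∀ s ∈ Set.Icc 0 T, ∀ x, ∀ k, ‖Dx k u (s, x)‖ ≤ C1 := by
      intro s hs x k
      calc ‖Dx k u (s, x)‖ ≤ C1 * rho d x := hb1 s hs x k
        _ ≤ C1 * 1 := mul_le_mul_of_nonneg_left (hρ1 x) hC1n
        _ = C1 := mul_one _
    set B : ℝ := d * (3 * C1 * C1) + d * (6 * CdD * C1) + 6 * CDt * C1
        + (6 * CdD * C1 + 6 * CDt * C2) with hBdef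
    have p1 : (0:ℝ) ≤ d * (3 * C1 * C1) :=
      mul_nonneg (Nat.cast_nonneg d) (by nlinarith)
    have p2 : (0:ℝ) ≤ d * (6 * CdD * C1) :=
      mul_nonneg (Nat.cast_nonneg d) (by nlinarith)
    have p3 : (0:ℝ) ≤ 6 * CDt * C1 := by nlinarith
    have p4 : (0:ℝ) ≤ 6 * CdD * C1 + 6 * CDt * C2 := by nlinarith
    have h1B : d * (3 * C1 * C1) ≤ B := by rw [hBdef]; linarith
    have h2B : d * (6 * CdD * C1) ≤ B := by rw [hBdef]; linarith
    have h3B : 6 * CDt * C1 ≤ B := by rw [hBdef]; linarith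
    have h4B : 6 * CdD * C1 + 6 * CDt * C2 ≤ B := by rw [hBdef]; linarith
    -- smoothness of the energy density and fluxes
    have hf2 : ContDiff ℝ (⊤ : ℕ∞) (fun q : ℝ × X d => ∑ k : Fin d, mdot (Dx k u q) (Dx k u q)) := by
      apply ContDiff.sum
      intro k _
      exact (mdotL.isBoundedBilinearMap.contDiff).comp
        ((contDiff_Dx hu k).prodMk (contDiff_Dx hu k))
    have hg2 : ∀ k : Fin d, ContDiff ℝ (⊤ : ℕ∞) (fun q : ℝ × X d => 2 * mdot (Dt u q) (Dx k u q)) := by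
      intro k
      exact contDiff_const.mul ((mdotL.isBoundedBilinearMap.contDiff).comp
        ((contDiff_Dt hu).prodMk (contDiff_Dx hu k)))
    have key := conserved T hT
      (fun q => ∑ k : Fin d, mdot (Dx k u q) (Dx k u q)) hf2
      (fun k => fun q => 2 * mdot (Dt u q) (Dx k u q)) hg2
      (fun p hp => div2 hu hSM p hp)
      (fun x => B * rho d x)
      (rho_integrable.const_mul B)
      (by -- energy density bound
        intro s hs x
        show |∑ k : Fin d, mdot (Dx k u (s, x)) (Dx k u (s, x))| ≤ B * rho d x
        calc |∑ k : Fin d, mdot (Dx k u (s, x)) (Dx k u (s, x))|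
            ≤ ∑ k : Fin d, |mdot (Dx k u (s, x)) (Dx k u (s, x))| :=
              Finset.abs_sum_le_sum_abs _ _
          _ ≤ ∑ _k : Fin d, 3 * C1 * C1 * rho d x := by
              apply Finset.sum_le_sum
              intro k _
              exact mdot_decay (hC1' s hs x k) (hb1 s hs x k) hC1n hC1n (hρ x)
          _ = d * (3 * C1 * C1) * rho d x := by
              rw [Finset.sum_const, Finset.card_univ, Fintype.card_fin, nsmul_eq_mul]; ring
          _ ≤ B * rho d x := mul_le_mul_of_nonneg_right h1B (hρ x))
      (by -- time-derivative bound
        intro s hs x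
        rw [dt_f2 hu (s, x)]
        have hterm : ∀ k : Fin d,
            |mdot (Dt (Dx k u) (s, x)) (Dx k u (s, x))
              + mdot (Dx k u (s, x)) (Dt (Dx k u) (s, x))| ≤ 6 * CdD * C1 * rho d x := by
          intro k
          have hDt : ‖Dt (Dx k u) (s, x)‖ ≤ CdD * rho d x := by
            rw [dt_dx_comm hu k (s, x)]
            exact hdxdtb s hs x k
          have hDtC : ‖Dt (Dx k u) (s, x)‖ ≤ CdD := by
            calc ‖Dt (Dx k u) (s, x)‖ ≤ CdD * rho d x := hDt
              _ ≤ CdD * 1 := mul_le_mul_of_nonneg_left (hρ1 x) hCdDn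
              _ = CdD := mul_one _
          have hm1 : |mdot (Dt (Dx k u) (s, x)) (Dx k u (s, x))| ≤ 3 * CdD * C1 * rho d x :=
            mdot_decay hDtC (hb1 s hs x k) hCdDn hC1n (hρ x)
          have hm2 : |mdot (Dx k u (s, x)) (Dt (Dx k u) (s, x))| ≤ 3 * C1 * CdD * rho d x :=
            mdot_decay (hC1' s hs x k) hDt hC1n hCdDn (hρ x)
          calc |mdot (Dt (Dx k u) (s, x)) (Dx k u (s, x))
              + mdot (Dx k u (s, x)) (Dt (Dx k u) (s, x))|
              ≤ |mdot (Dt (Dx k u) (s, x)) (Dx k u (s, x))|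
                + |mdot (Dx k u (s, x)) (Dt (Dx k u) (s, x))| := abs_add_le _ _
            _ ≤ 3 * CdD * C1 * rho d x + 3 * C1 * CdD * rho d x := add_le_add hm1 hm2
            _ = 6 * CdD * C1 * rho d x := by ring
        calc |∑ k : Fin d, (mdot (Dt (Dx k u) (s, x)) (Dx k u (s, x))
              + mdot (Dx k u (s, x)) (Dt (Dx k u) (s, x)))|
            ≤ ∑ k : Fin d, |mdot (Dt (Dx k u) (s, x)) (Dx k u (s, x))
              + mdot (Dx k u (s, x)) (Dt (Dx k u) (s, x))| := Finset.abs_sum_le_sum_abs _ _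
          _ ≤ ∑ _k : Fin d, 6 * CdD * C1 * rho d x :=
              Finset.sum_le_sum (fun k _ => hterm k)
          _ = d * (6 * CdD * C1) * rho d x := by
              rw [Finset.sum_const, Finset.card_univ, Fintype.card_fin, nsmul_eq_mul]; ring
          _ ≤ B * rho d x := mul_le_mul_of_nonneg_right h2B (hρ x))
      (by -- flux bound
        intro k s hs x
        show |2 * mdot (Dt u (s, x)) (Dx k u (s, x))| ≤ B * rho d x
        have hDtC : ‖Dt u (s, x)‖ ≤ CDt := by
          calc ‖Dt u (s, x)‖ ≤ CDt * rho d x := hdtb s hs x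
            _ ≤ CDt * 1 := mul_le_mul_of_nonneg_left (hρ1 x) hCDtn
            _ = CDt := mul_one _
        rw [abs_mul, abs_two]
        calc 2 * |mdot (Dt u (s, x)) (Dx k u (s, x))|
            ≤ 2 * (3 * CDt * C1 * rho d x) := by
              have := mdot_decay hDtC (hb1 s hs x k) hCDtn hC1n (hρ x)
              linarith
          _ = 6 * CDt * C1 * rho d x := by ring
          _ ≤ B * rho d x := mul_le_mul_of_nonneg_right h3B (hρ x))
      (by -- flux-derivative bound
        intro k s hs x
        rw [dx_g2 hu k (s, x)]
        have hDtC : ‖Dt u (s, x)‖ ≤ CDt := by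
          calc ‖Dt u (s, x)‖ ≤ CDt * rho d x := hdtb s hs x
            _ ≤ CDt * 1 := mul_le_mul_of_nonneg_left (hρ1 x) hCDtn
            _ = CDt := mul_one _
        have hdD : ‖Dx k (Dt u) (s, x)‖ ≤ CdD := by
          calc ‖Dx k (Dt u) (s, x)‖ ≤ CdD * rho d x := hdxdtb s hs x k
            _ ≤ CdD * 1 := mul_le_mul_of_nonneg_left (hρ1 x) hCdDn
            _ = CdD := mul_one _
        have hm1 : |mdot (Dx k (Dt u) (s, x)) (Dx k u (s, x))| ≤ 3 * CdD * C1 * rho d x :=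
          mdot_decay hdD (hb1 s hs x k) hCdDn hC1n (hρ x)
        have hm2 : |mdot (Dt u (s, x)) (Dx k (Dx k u) (s, x))| ≤ 3 * CDt * C2 * rho d x :=
          mdot_decay hDtC (hb2 s hs x k k) hCDtn hC2n (hρ x)
        rw [abs_mul, abs_two]
        calc 2 * |mdot (Dx k (Dt u) (s, x)) (Dx k u (s, x))
              + mdot (Dt u (s, x)) (Dx k (Dx k u) (s, x))|
            ≤ 2 * (|mdot (Dx k (Dt u) (s, x)) (Dx k u (s, x))|
              + |mdot (Dt u (s, x)) (Dx k (Dx k u) (s, x))|) := by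
              have := abs_add_le (mdot (Dx k (Dt u) (s, x)) (Dx k u (s, x)))
                (mdot (Dt u (s, x)) (Dx k (Dx k u) (s, x)))
              linarith
          _ ≤ 2 * (3 * CdD * C1 * rho d x + 3 * CDt * C2 * rho d x) := by linarith
          _ = (6 * CdD * C1 + 6 * CDt * C2) * rho d x := by ring
          _ ≤ B * rho d x := mul_le_mul_of_nonneg_right h4B (hρ x))
    exact key t ht
end
end
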